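/- arXiv:1212.2951 — 4 statements merged into one kernel-verified Lean document; each statement's English description precedes it below -/
import Mathlib

section
/- Let R, S be real symmetric n×n matrices with S invertible. The number of real negative eigenvalues k_r, the number of eigenvalues with positive imaginary part k_c, and the total negative Krein index k_i⁻ of the positive real eigenvalues of the pencil (R - zS), all counted with appropriate multiplicity, satisfy k_r + 2k_c + 2k_i⁻ ≤ 2n, where eigenvalues are counted for the generalized eigenvalue problem Ru = zSu. -/
/-!
Since `R - X • S = -S (X - S⁻¹ R)`, the eigenvalues of the pencil are those of `S⁻¹ R`, with the
same algebraic multiplicities; over `ℂ` there are `n` of them, and the non-real ones come in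
conjugate pairs. Hence `k_r + 2 k_c + k_p ≤ n`, where `k_p` counts the positive eigenvalues. The
negative Krein index at `z` is at most `dim E_z`, the geometric multiplicity of `z` as an eigenvalue
of `S⁻¹ R`, which is at most its algebraic multiplicity; summing, `k_i⁻ ≤ k_p ≤ n`.
-/

open Matrix Polynomial

/-- The complexification of a real matrix. -/
def cmplx {n : ℕ} (A : Matrix (Fin n) (Fin n) ℝ) : Matrix (Fin n) (Fin n) ℂ :=
  A.map (fun x => (x : ℂ))

/-- The (real) eigenspace `E_z = ker (R - z S)` of the pencil `R - z S`. -/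
noncomputable def pencilEigSp {n : ℕ} (R S : Matrix (Fin n) (Fin n) ℝ) (z : ℝ) :
    Submodule ℝ (Fin n → ℝ) :=
  LinearMap.ker (Matrix.toLin' (R - z • S))

/-- The negative Krein index `k_i⁻(z)` of a real eigenvalue `z` of the pencil `R - z S`:
the maximal dimension of a subspace of the eigenspace `E_z` on which the quadratic form
`u ↦ ⟨u, R u⟩` is negative definite (this equals the number of negative eigenvalues of
the Gram matrix `(⟨z_i, R z_j⟩)` for any basis of `E_z`). -/
noncomputable def kiNeg {n : ℕ} (R S : Matrix (Fin n) (Fin n) ℝ) (z : ℝ) : ℕ :=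
  sSup {d : ℕ | ∃ W : Submodule ℝ (Fin n → ℝ), W ≤ pencilEigSp R S z ∧
    Module.finrank ℝ W = d ∧ ∀ u ∈ W, u ≠ 0 → u ⬝ᵥ R.mulVec u < 0}

lemma Multiset.sum_toFinset_le_card {α : Type*} [DecidableEq α] (s : Multiset α) (f : α → ℕ)
    (hf : ∀ a ∈ s, f a ≤ s.count a) : ∑ a ∈ s.toFinset, f a ≤ Multiset.card s := by
  calc ∑ a ∈ s.toFinset, f a ≤ ∑ a ∈ s.toFinset, s.count a :=
        Finset.sum_le_sum fun a ha => hf a (Multiset.mem_toFinset.mp ha)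
    _ = Multiset.card s := Multiset.toFinset_sum_count_eq s

lemma Multiset.card_filter_neg_add_card_filter_pos_le {α : Type*} [LinearOrder α] [Zero α]
    (s : Multiset α) :
    Multiset.card (s.filter (· < 0)) + Multiset.card (s.filter (0 < ·)) ≤ Multiset.card s := by
  calc _ ≤ Multiset.card (s.filter (· < 0)) + Multiset.card (s.filter fun a => ¬ a < 0) := by
        gcongr
        exact Multiset.monotone_filter_right s fun _ ha => lt_asymm ha
    _ = Multiset.card s := by rw [← Multiset.card_add, Multiset.filter_add_not]

namespace Polynomial

lemma map_conj_roots_map_ofReal (p : ℝ[X]) :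
    (p.map (algebraMap ℝ ℂ)).roots.map (starRingEnd ℂ) = (p.map (algebraMap ℝ ℂ)).roots := by
  have hconj : (p.map (algebraMap ℝ ℂ)).map (starRingEnd ℂ) = p.map (algebraMap ℝ ℂ) := by
    rw [map_map]; congr 1; ext x : 1; simp
  rw [← (IsAlgClosed.splits _).roots_map, hconj]

lemma card_filter_im_neg_roots_map_ofReal (p : ℝ[X]) :
    Multiset.card ((p.map (algebraMap ℝ ℂ)).roots.filter (·.im < 0)) =
      Multiset.card ((p.map (algebraMap ℝ ℂ)).roots.filter (0 < ·.im)) := by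
  conv_lhs => rw [← map_conj_roots_map_ofReal]
  rw [Multiset.filter_map, Multiset.card_map]
  congr 2
  ext z
  simp

lemma card_roots_add_two_mul_card_filter_im_pos_le (p : ℝ[X]) :
    Multiset.card p.roots +
      2 * Multiset.card ((p.map (algebraMap ℝ ℂ)).roots.filter (0 < ·.im)) ≤ p.natDegree := by
  have hconj := card_filter_im_neg_roots_map_ofReal p
  set q := p.map (algebraMap ℝ ℂ)
  have htrichotomy : q.roots.filter (·.im = 0) + q.roots.filter (0 < ·.im) +
      q.roots.filter (·.im < 0) = q.roots := by
    ext z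
    simp only [Multiset.count_add, Multiset.count_filter]
    rcases lt_trichotomy z.im 0 with h | h | h
    · simp [h, h.ne, h.not_gt]
    · simp [h]
    · simp [h, h.ne', h.not_gt]
  have hreal : p.roots.map (algebraMap ℝ ℂ) ≤ q.roots.filter (·.im = 0) :=
    Multiset.le_filter.mpr ⟨map_roots_le_of_injective p (algebraMap ℝ ℂ).injective,
      by simp only [Multiset.mem_map]; rintro _ ⟨x, -, rfl⟩; simp⟩
  have hcard := congrArg Multiset.card htrichotomy
  have hreal_card := Multiset.card_le_card hreal
  rw [Multiset.card_add, Multiset.card_add, hconj] at hcard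
  rw [Multiset.card_map] at hreal_card
  have hdeg : Multiset.card q.roots ≤ p.natDegree := (card_roots' q).trans_eq (natDegree_map _)
  omega

end Polynomial

section PencilDet

variable {ι K L : Type*} [Fintype ι] [DecidableEq ι] [CommRing K] [CommRing L]

lemma Matrix.det_pencil_eq_C_mul_charpoly (R S : Matrix ι ι K) (hS : IsUnit S.det) :
    det (R.map C - (X : K[X]) • S.map C) =
      C ((-1) ^ Fintype.card ι * S.det) * (S⁻¹ * R).charpoly := by
  have hSA : S * (S⁻¹ * R) = R := by rw [← Matrix.mul_assoc, mul_nonsing_inv _ hS, one_mul]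
  have hfactor : R.map C - (X : K[X]) • S.map C = -(S.map C * charmatrix (S⁻¹ * R)) := by
    rw [charmatrix, Matrix.mul_sub, RingHom.mapMatrix_apply, ← Matrix.map_mul, hSA,
      ← scalar_commute X (fun r => Commute.all X r) (S.map C), scalar_apply,
      ← smul_eq_diagonal_mul, neg_sub]
  rw [hfactor, det_neg, det_mul, ← charpoly, ← C.mapMatrix_apply, ← C.map_det, C_mul, C_pow,
    C_neg, C_1, mul_assoc]

lemma Matrix.det_pencil_map (f : K →+* L) (R S : Matrix ι ι K) :
    det ((R.map f).map C - (X : L[X]) • (S.map f).map C) =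
      (det (R.map C - (X : K[X]) • S.map C)).map f := by
  rw [← coe_mapRingHom, RingHom.map_det]
  congr 1
  ext i j
  simp

end PencilDet

section KreinIndex

variable {n : ℕ} (R S : Matrix (Fin n) (Fin n) ℝ)

lemma kiNeg_le_finrank_pencilEigSp (z : ℝ) :
    kiNeg R S z ≤ Module.finrank ℝ (pencilEigSp R S z) :=
  csSup_le ⟨0, ⊥, bot_le, by simp, by simp⟩ fun _ ⟨_, hW, hd, _⟩ =>
    hd ▸ Submodule.finrank_mono hW

lemma pencilEigSp_eq_eigenspace (hS : IsUnit S.det) (z : ℝ) :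
    pencilEigSp R S z = Module.End.eigenspace (toLin' (S⁻¹ * R)) z := by
  ext u
  rw [pencilEigSp, LinearMap.mem_ker, Module.End.mem_eigenspace_iff, toLin'_apply, toLin'_apply,
    sub_mulVec, smul_mulVec, sub_eq_zero]
  constructor
  · intro h
    rw [← mulVec_mulVec, h, mulVec_smul, mulVec_mulVec, nonsing_inv_mul S hS, one_mulVec]
  · intro h
    rw [← mulVec_smul, ← h, mulVec_mulVec, ← Matrix.mul_assoc, mul_nonsing_inv S hS, one_mul]

lemma kiNeg_le_rootMultiplicity_charpoly (hS : IsUnit S.det) (z : ℝ) :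
    kiNeg R S z ≤ (S⁻¹ * R).charpoly.rootMultiplicity z := by
  calc kiNeg R S z ≤ Module.finrank ℝ (pencilEigSp R S z) := kiNeg_le_finrank_pencilEigSp R S z
    _ ≤ (toLin' (S⁻¹ * R)).charpoly.rootMultiplicity z := by
      rw [pencilEigSp_eq_eigenspace R S hS]
      exact LinearMap.finrank_eigenspace_le _ z
    _ = (S⁻¹ * R).charpoly.rootMultiplicity z := by rw [charpoly_toLin']

end KreinIndex

theorem pencil_index_bound_general (n : ℕ) (R S : Matrix (Fin n) (Fin n) ℝ)
    (hSinv : IsUnit S.det)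
    (p : Polynomial ℝ)
    (hp : p = Matrix.det (R.map (C : ℝ → Polynomial ℝ) -
      (X : Polynomial ℝ) • S.map (C : ℝ → Polynomial ℝ)))
    (pC : Polynomial ℂ)
    (hpC : pC = Matrix.det ((cmplx R).map (C : ℂ → Polynomial ℂ) -
      (X : Polynomial ℂ) • (cmplx S).map (C : ℂ → Polynomial ℂ))) :
    Multiset.card (p.roots.filter (fun t => t < 0)) +
      2 * Multiset.card (pC.roots.filter (fun ζ => 0 < ζ.im)) +
      2 * ∑ t ∈ p.roots.toFinset.filter (fun t => 0 < t), kiNeg R S t ≤ 2 * n := by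
  have hc : (-1) ^ n * S.det ≠ 0 := mul_ne_zero (pow_ne_zero _ (by norm_num)) hSinv.ne_zero
  have hp_charpoly : p = C ((-1) ^ n * S.det) * (S⁻¹ * R).charpoly := by
    rw [hp, det_pencil_eq_C_mul_charpoly R S hSinv, Fintype.card_fin]
  have hdeg : p.natDegree = n := by
    rw [hp_charpoly, natDegree_C_mul hc, charpoly_natDegree_eq_dim, Fintype.card_fin]
  have hroots : p.roots = (S⁻¹ * R).charpoly.roots := by rw [hp_charpoly, roots_C_mul _ hc]
  have hpC_map : pC = p.map (algebraMap ℝ ℂ) := by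
    rw [hpC, hp]
    exact det_pencil_map (algebraMap ℝ ℂ) R S
  have hkrein : ∑ t ∈ p.roots.toFinset.filter (0 < ·), kiNeg R S t ≤
      Multiset.card (p.roots.filter (0 < ·)) := by
    rw [← Multiset.toFinset_filter]
    refine Multiset.sum_toFinset_le_card _ _ fun t ht => ?_
    rw [Multiset.count_filter_of_pos (Multiset.of_mem_filter ht), hroots, count_roots]
    exact kiNeg_le_rootMultiplicity_charpoly R S hSinv t
  have hcomplex := card_roots_add_two_mul_card_filter_im_pos_le p
  have hreal := p.roots.card_filter_neg_add_card_filter_pos_le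
  rw [← hpC_map, hdeg] at hcomplex
  omega

/-- for `R, S` real symmetric with `S` invertible and `det (R - z S)` not
identically zero, the counts `k_r` (negative real eigenvalues with multiplicity), `k_c`
(eigenvalues with positive imaginary part with multiplicity), and `k_i⁻` (total negative
Krein index of the positive real eigenvalues) of the pencil `R - z S` satisfy
`k_r + 2 k_c + 2 k_i⁻ ≤ 2 n`. -/
theorem pencil_index_bound (n : ℕ) (R S : Matrix (Fin n) (Fin n) ℝ)
    (hR : Rᵀ = R) (hS : Sᵀ = S) (hSinv : IsUnit S.det)
    (p : Polynomial ℝ)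
    (hp : p = Matrix.det (R.map (C : ℝ → Polynomial ℝ) -
      (X : Polynomial ℝ) • S.map (C : ℝ → Polynomial ℝ)))
    (hp0 : p ≠ 0)
    (pC : Polynomial ℂ)
    (hpC : pC = Matrix.det ((cmplx R).map (C : ℂ → Polynomial ℂ) -
      (X : Polynomial ℂ) • (cmplx S).map (C : ℂ → Polynomial ℂ))) :
    Multiset.card (p.roots.filter (fun t => t < 0)) +
      2 * Multiset.card (pC.roots.filter (fun ζ => 0 < ζ.im)) +
      2 * ∑ t ∈ p.roots.toFinset.filter (fun t => 0 < t), kiNeg R S t ≤ 2 * n :=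
  pencil_index_bound_general n R S hSinv p hp pC hpC
end

section
/- With the Krein matrix K(z) as defined (for real symmetric R, S with S invertible), a complex number z with Im z ≠ 0 is an eigenvalue of the pencil (R − zS) if and only if det K(z) = 0. -/
/-!
Let `V` be the matrix with columns `s i`. The block matrix `Ψ = [T V; Vᵀ 0]` is invertible, with
left inverse `[T S, V; Vᵀ, 0]`, and
`Ψᵀ · diag (R - z S, -z) · Ψ = [G, B; Bᵀ, C]` with `G = T R T - z`, `B = T R V` and
`C = Vᵀ (R - z S) V`. For non-real `z` the matrix `G` is invertible because `T R T` is symmetric,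
and `K(z)` is the Schur complement of `G`, so
`(det Ψ)² (-z)ᵏ det (R - z S) = det G · det K(z)`.
-/
open Matrix

/-- The Gram matrix `(⟨s i, A (s j)⟩)` of a real matrix `A` on the family `s`. -/
def gramR {n k : ℕ} (A : Matrix (Fin n) (Fin n) ℝ) (s : Fin k → Fin n → ℝ) :
    Matrix (Fin k) (Fin k) ℝ :=
  Matrix.of fun i j => s i ⬝ᵥ A.mulVec (s j)

/-- The matrix `B` whose `j`-th column is `S₊^{-1/2} P R s j = T (P (R (s j)))`, where `T`
plays the role of `S₊^{-1/2}`. -/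
def Bmat {n k : ℕ} (T P R : Matrix (Fin n) (Fin n) ℝ) (s : Fin k → Fin n → ℝ) :
    Matrix (Fin n) (Fin k) ℝ :=
  Matrix.of fun i j => (T.mulVec (P.mulVec (R.mulVec (s j)))) i

/-- The Krein matrix `K(z) = R_N - z S_N - B^* (R̃ - z)⁻¹ B`, where `R̃ = T R T` with
`T = S₊^{-1/2}` (so that `R̃ = S₊^{-1/2} P R P S₊^{-1/2}` on `N(S)ᗮ`). -/
noncomputable def KreinMatrix {n k : ℕ} (R S P T : Matrix (Fin n) (Fin n) ℝ)
    (s : Fin k → Fin n → ℝ) (z : ℂ) : Matrix (Fin k) (Fin k) ℂ :=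
  cmplx (gramR R s) - z • cmplx (gramR S s) -
    (cmplx' (Bmat T P R s))ᴴ * ((cmplx (T * R * T)) - z • 1)⁻¹ * cmplx' (Bmat T P R s)
where cmplx' (B : Matrix (Fin n) (Fin k) ℝ) : Matrix (Fin n) (Fin k) ℂ :=
  B.map (fun x => (x : ℂ))

open Complex

section Splitting

variable {m k α : Type*} [Fintype m] [Fintype k] [DecidableEq m] [DecidableEq k]

theorem Matrix.IsHermitian.isUnit_det_sub_smul_one {𝕜 : Type*} [RCLike 𝕜] {A : Matrix m m 𝕜}
    (hA : A.IsHermitian) {z : 𝕜} (hz : RCLike.im z ≠ 0) : IsUnit (A - z • 1).det := by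
  have hzA : z ∉ spectrum 𝕜 A := by
    rw [hA.spectrum_eq_image_range]
    rintro ⟨x, -, rfl⟩
    exact hz (RCLike.ofReal_im x)
  rwa [spectrum.mem_iff, not_not, Algebra.algebraMap_eq_smul_one, ← IsUnit.neg_iff, neg_sub,
    isUnit_iff_isUnit_det] at hzA

theorem Matrix.det_fromBlocks_of_isUnit_det [CommRing α] {A : Matrix m m α} (hA : IsUnit A.det)
    (B : Matrix m k α) (C : Matrix k m α) (D : Matrix k k α) :
    (fromBlocks A B C D).det = A.det * (D - C * A⁻¹ * B).det := by
  let := invertibleOfIsUnitDet A hA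
  rw [det_fromBlocks₁₁, invOf_eq_nonsing_inv]

theorem Matrix.eq_one_sub_transpose_mul_self_of_fixed_iff {U : Matrix k m ℝ} {P : Matrix m m ℝ}
    (hU : U * Uᵀ = 1) (hPsym : Pᵀ = P) (hPidem : P * P = P)
    (hPfix : ∀ x, P *ᵥ x = x ↔ U *ᵥ x = 0) : P = 1 - Uᵀ * U := by
  have hPU : ∀ v, P *ᵥ (Uᵀ *ᵥ v) = 0 := by
    intro v
    set w := P *ᵥ (Uᵀ *ᵥ v)
    have hPw : P *ᵥ w = w := by rw [mulVec_mulVec, hPidem]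
    refine dotProduct_self_eq_zero.1 ?_
    calc w ⬝ᵥ w = (Uᵀ *ᵥ v) ⬝ᵥ (P *ᵥ w) := by
          conv_rhs => rw [dotProduct_mulVec, ← mulVec_transpose, hPsym]
      _ = 0 := by
          rw [hPw, mulVec_transpose, ← dotProduct_mulVec, (hPfix w).1 hPw, dotProduct_zero]
  refine ext_iff_mulVec.2 fun x => ?_
  set y := x - Uᵀ *ᵥ (U *ᵥ x)
  have hPy : P *ᵥ y = y := (hPfix y).2 <| by
    rw [mulVec_sub, mulVec_mulVec, mulVec_mulVec, hU, Matrix.one_mul, sub_self]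
  calc P *ᵥ x = P *ᵥ y + P *ᵥ (Uᵀ *ᵥ (U *ᵥ x)) := by rw [← mulVec_add, sub_add_cancel]
    _ = (1 - Uᵀ * U) *ᵥ x := by
      rw [hPy, hPU, add_zero, sub_mulVec, one_mulVec, ← mulVec_mulVec]

/-- In the Krein construction `T = S₊^{-1/2}`, extended by `0` on `N(S)`, and the columns of `V`
are an orthonormal basis of `N(S)`. -/
structure IsKreinSplitting [CommRing α] (S T : Matrix m m α) (V : Matrix m k α) : Prop where
  transpose_mul_self : Vᵀ * V = 1
  mul_mul_add_mul_transpose : T * S * T + V * Vᵀ = 1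
  mul_mul_eq_zero : T * S * V = 0
  transpose_mul_mul_eq_zero : Vᵀ * S * T = 0
  transpose_mul_eq_zero : Vᵀ * T = 0

namespace IsKreinSplitting

section CommRing

variable [CommRing α] {S T : Matrix m m α} {V : Matrix m k α}

theorem of_projection {P : Matrix m m α} {D : Matrix k k α} (hS : Sᵀ = S) (hT : Tᵀ = T)
    (hV : Vᵀ * V = 1) (hSV : S * V = V * D) (hP : P = 1 - V * Vᵀ) (hTP : P * T * P = T)
    (hTsq : T * (P * S * P) * T = P) : IsKreinSplitting S T V := by
  have hPV : P * V = 0 := by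
    rw [hP, Matrix.sub_mul, Matrix.one_mul, Matrix.mul_assoc, hV, Matrix.mul_one, sub_self]
  have hPP : P * P = P := by
    nth_rewrite 2 [hP]
    rw [Matrix.mul_sub, Matrix.mul_one, ← Matrix.mul_assoc, hPV, Matrix.zero_mul, sub_zero]
  have hTV : T * V = 0 := by rw [← hTP, Matrix.mul_assoc, hPV, Matrix.mul_zero]
  have hTSV : T * S * V = 0 := by
    rw [Matrix.mul_assoc, hSV, ← Matrix.mul_assoc, hTV, Matrix.zero_mul]
  have hTST : T * S * T = P := by
    rw [← hTP]
    calc P * T * P * S * (P * T * P) = P * (T * (P * S * P) * T) * P := by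
          simp only [Matrix.mul_assoc]
      _ = P := by rw [hTsq, hPP, hPP]
  refine ⟨hV, by rw [hTST, hP, sub_add_cancel], hTSV, ?_, ?_⟩
  · simpa [Matrix.transpose_mul, hS, hT, Matrix.mul_assoc] using congrArg transpose hTSV
  · rw [← hT, ← Matrix.transpose_mul, hTV, transpose_zero]

theorem map {β : Type*} [CommRing β] (h : IsKreinSplitting S T V) (f : α →+* β) :
    IsKreinSplitting (S.map f) (T.map f) (V.map f) := by
  obtain ⟨h₁, h₂, h₃, h₄, h₅⟩ := h
  constructor <;>
    simp only [← transpose_map, ← Matrix.map_mul, ← Matrix.map_add _ (map_add f), h₁, h₂, h₃, h₄,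
      h₅, Matrix.map_zero _ (map_zero f), Matrix.map_one _ (map_zero f) (map_one f)]

theorem isUnit_det_fromBlocks (h : IsKreinSplitting S T V) :
    IsUnit (fromBlocks T V Vᵀ 0).det := by
  have hinv : fromBlocks (T * S) V Vᵀ 0 * fromBlocks T V Vᵀ 0 = 1 := by
    rw [fromBlocks_multiply, h.mul_mul_add_mul_transpose, h.transpose_mul_eq_zero,
      h.transpose_mul_self, h.mul_mul_eq_zero]
    simp
  exact IsUnit.of_mul_eq_one_right _ (by rw [← det_mul, hinv, det_one])

theorem fromBlocks_mul_fromBlocks_mul (h : IsKreinSplitting S T V) (R : Matrix m m α) (z : α) :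
    fromBlocks T V Vᵀ 0 * fromBlocks (R - z • S) 0 0 (-z • 1) * fromBlocks T V Vᵀ 0 =
      fromBlocks (T * R * T - z • 1) (T * R * V) (Vᵀ * R * T)
        (Vᵀ * R * V - z • (Vᵀ * S * V)) := by
  have hTT : T * (R - z • S) * T - z • (V * Vᵀ) = T * R * T - z • 1 := by
    rw [← h.mul_mul_add_mul_transpose]
    simp only [Matrix.mul_sub, Matrix.sub_mul, Matrix.mul_smul, Matrix.smul_mul, smul_add,
      Matrix.mul_assoc]
    abel
  have hTV : T * (R - z • S) * V = T * R * V := by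
    simp only [Matrix.mul_sub, Matrix.sub_mul, Matrix.mul_smul, Matrix.smul_mul,
      h.mul_mul_eq_zero, smul_zero, sub_zero]
  have hVT : Vᵀ * (R - z • S) * T = Vᵀ * R * T := by
    simp only [Matrix.mul_sub, Matrix.sub_mul, Matrix.mul_smul, Matrix.smul_mul,
      h.transpose_mul_mul_eq_zero, smul_zero, sub_zero]
  have hVV : Vᵀ * (R - z • S) * V = Vᵀ * R * V - z • (Vᵀ * S * V) := by
    simp only [Matrix.mul_sub, Matrix.sub_mul, Matrix.mul_smul, Matrix.smul_mul]
  rw [← hTT, ← hTV, ← hVT, ← hVV]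
  simp [fromBlocks_multiply, sub_eq_add_neg]

end CommRing

theorem det_sub_smul_eq_zero_iff [Field α] {S T : Matrix m m α} {V : Matrix m k α}
    (h : IsKreinSplitting S T V) (R : Matrix m m α) {z : α} (hz : z ≠ 0)
    (hG : IsUnit (T * R * T - z • 1).det) :
    (R - z • S).det = 0 ↔
      (Vᵀ * R * V - z • (Vᵀ * S * V) - Vᵀ * R * T * (T * R * T - z • 1)⁻¹ * (T * R * V)).det
        = 0 := by
  have key := congrArg det (h.fromBlocks_mul_fromBlocks_mul R z)
  rw [det_mul, det_mul, det_fromBlocks_zero₂₁, det_fromBlocks_of_isUnit_det hG, det_smul,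
    det_one, mul_one] at key
  constructor
  · intro hM
    rw [hM] at key
    simpa [hG.ne_zero] using key.symm
  · intro hK
    rw [hK] at key
    simpa [h.isUnit_det_fromBlocks.ne_zero, hz] using key

end IsKreinSplitting

end Splitting

theorem gramR_eq_mul {n k : ℕ} (A : Matrix (Fin n) (Fin n) ℝ) (s : Fin k → Fin n → ℝ) :
    gramR A s = of s * A * (of s)ᵀ := by
  ext i j
  rw [Matrix.mul_assoc]
  rfl

theorem Bmat_eq_mul {n k : ℕ} (T P R : Matrix (Fin n) (Fin n) ℝ) (s : Fin k → Fin n → ℝ) :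
    Bmat T P R s = T * P * R * (of s)ᵀ := by
  ext i j
  simp only [Bmat, of_apply, mulVec_mulVec, ← Matrix.mul_assoc]
  rfl

theorem Matrix.conjTranspose_map_ofRealHom {m n : Type*} (A : Matrix m n ℝ) :
    (A.map ofRealHom)ᴴ = Aᵀ.map ofRealHom := by
  rw [← conjTranspose_map (⇑ofRealHom) (fun x => (conj_ofReal x).symm),
    conjTranspose_eq_transpose_of_trivial]

theorem kreinMatrix_eq_map {n k : ℕ} {R S P T : Matrix (Fin n) (Fin n) ℝ}
    {s : Fin k → Fin n → ℝ} (hR : Rᵀ = R) (hT : Tᵀ = T) (hTP : T * P = T) (z : ℂ) :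
    KreinMatrix R S P T s z =
      ((of s)ᵀ.map ofRealHom)ᵀ * R.map ofRealHom * (of s)ᵀ.map ofRealHom -
        z • (((of s)ᵀ.map ofRealHom)ᵀ * S.map ofRealHom * (of s)ᵀ.map ofRealHom) -
        ((of s)ᵀ.map ofRealHom)ᵀ * R.map ofRealHom * T.map ofRealHom *
          (T.map ofRealHom * R.map ofRealHom * T.map ofRealHom - z • 1)⁻¹ *
          (T.map ofRealHom * R.map ofRealHom * (of s)ᵀ.map ofRealHom) := by
  have hc {m : ℕ} (A : Matrix (Fin m) (Fin m) ℝ) : cmplx A = A.map ofRealHom := rfl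
  have hc' (B : Matrix (Fin n) (Fin k) ℝ) : KreinMatrix.cmplx' B = B.map ofRealHom := rfl
  rw [KreinMatrix, hc, hc, hc, hc', Bmat_eq_mul, hTP, conjTranspose_map_ofRealHom, gramR_eq_mul,
    gramR_eq_mul]
  simp only [Matrix.transpose_mul, hR, hT, transpose_transpose, Matrix.map_mul, transpose_map,
    Matrix.mul_assoc]

theorem kreinMatrix_detects_nonreal_eigenvalues_general (n k : ℕ) (S R : Matrix (Fin n) (Fin n) ℝ)
    (hS : Sᵀ = S) (hR : Rᵀ = R)
    (s : Fin k → Fin n → ℝ) (μ : Fin k → ℝ)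
    (hon : ∀ i j, s i ⬝ᵥ s j = if i = j then (1:ℝ) else 0)
    (heig : ∀ i, S.mulVec (s i) = μ i • s i)
    (P : Matrix (Fin n) (Fin n) ℝ) (hPsym : Pᵀ = P) (hPidem : P * P = P)
    (hPfix : ∀ x : Fin n → ℝ, P.mulVec x = x ↔ ∀ i, s i ⬝ᵥ x = 0)
    (T : Matrix (Fin n) (Fin n) ℝ) (hT : Tᵀ = T) (hTP : P * T * P = T)
    (hTsq : T * (P * S * P) * T = P) :
    ∀ z : ℂ, z.im ≠ 0 →
      (((cmplx R) - z • (cmplx S)).det = 0 ↔ (KreinMatrix R S P T s z).det = 0) := by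
  intro z hz
  have hU : of s * (of s)ᵀ = 1 := by
    ext i j
    exact hon i j
  have hSU : S * (of s)ᵀ = (of s)ᵀ * diagonal μ := by
    ext i j
    rw [mul_diagonal]
    exact (congrFun (heig j) i).trans (mul_comm _ _)
  have hP : P = 1 - (of s)ᵀ * of s :=
    eq_one_sub_transpose_mul_self_of_fixed_iff hU hPsym hPidem
      fun x => (hPfix x).trans funext_iff.symm
  have hsplit := (IsKreinSplitting.of_projection hS hT (by rwa [transpose_transpose]) hSU
    (by rwa [transpose_transpose]) hTP hTsq).map ofRealHom
  have hG : IsUnit ((T * R * T).map ofRealHom - z • 1).det := by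
    refine IsHermitian.isUnit_det_sub_smul_one ?_ hz
    rw [IsHermitian, conjTranspose_map_ofRealHom, Matrix.transpose_mul, Matrix.transpose_mul, hR,
      hT, Matrix.mul_assoc]
  rw [kreinMatrix_eq_map hR hT (by rw [← hTP, Matrix.mul_assoc, hPidem])]
  simp only [Matrix.map_mul] at hG
  exact hsplit.det_sub_smul_eq_zero_iff (R.map ofRealHom) (fun h => hz (by simp [h])) hG

/-- under the standard Krein-matrix construction, a non-real `z` is an
eigenvalue of the pencil `R - z S` (i.e. `det (R - z S) = 0`) iff `det K(z) = 0`. -/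
theorem kreinMatrix_detects_nonreal_eigenvalues (n k : ℕ) (S R : Matrix (Fin n) (Fin n) ℝ)
    (hS : Sᵀ = S) (hSh : S.IsHermitian) (hR : Rᵀ = R) (hSinv : IsUnit S.det)
    (hkneg : Nat.card {i // hSh.eigenvalues i < 0} = k)
    (s : Fin k → Fin n → ℝ) (μ : Fin k → ℝ)
    (hon : ∀ i j, s i ⬝ᵥ s j = if i = j then (1:ℝ) else 0)
    (heig : ∀ i, S.mulVec (s i) = μ i • s i) (hμ : ∀ i, μ i < 0)
    (P : Matrix (Fin n) (Fin n) ℝ) (hPsym : Pᵀ = P) (hPidem : P * P = P)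
    (hPfix : ∀ x : Fin n → ℝ, P.mulVec x = x ↔ ∀ i, s i ⬝ᵥ x = 0)
    (T : Matrix (Fin n) (Fin n) ℝ) (hT : Tᵀ = T) (hTP : P * T * P = T)
    (hTsq : T * (P * S * P) * T = P)
    (hTpos : ∀ x : Fin n → ℝ, P.mulVec x = x → x ≠ 0 → 0 < x ⬝ᵥ T.mulVec x) :
    ∀ z : ℂ, z.im ≠ 0 →
      (((cmplx R) - z • (cmplx S)).det = 0 ↔ (KreinMatrix R S P T s z).det = 0) :=
  kreinMatrix_detects_nonreal_eigenvalues_general n k S R hS hR s μ hon heig P hPsym hPidem hPfix T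
    hT hTP hTsq
end

section
/- Let S be a real symmetric invertible matrix with negative spectral subspace N(S), and K(z) the associated Krein matrix for the pencil (R − zS). For z real and z → −∞, each eigenvalue r_j(z) of K(z) satisfies r_j(z)/z → (a positive limit); in particular, every Krein eigenvalue is negative for all sufficiently negative real z. (It suffices to show: lim_{z→−∞} K(z)/z = −S_N, and −S_N is positive definite.) -/
/-!
For `z ≠ 0`, `K(z)/z = R_N/z - S_N - z⁻¹ Bᵀ (R̃ - z)⁻¹ B`, and the resolvent
`(R̃ - z)⁻¹ = z⁻¹ (z⁻¹ R̃ - 1)⁻¹` tends to `0 · (-1)⁻¹ = 0` because matrix inversion is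
continuous at the invertible matrix `-1`; hence `K(z)/z → -S_N`. On an orthonormal family of
eigenvectors, `S_N` is the diagonal matrix of their (negative) eigenvalues.
-/

open Matrix Filter

/-- The Krein matrix for real `z`: `K(z) = R_N - z S_N - Bᵀ (R̃ - z)⁻¹ B` with
`R̃ = T R T`, `T = S₊^{-1/2}`. -/
noncomputable def KreinMatrixR {n k : ℕ} (R S P T : Matrix (Fin n) (Fin n) ℝ)
    (s : Fin k → Fin n → ℝ) (z : ℝ) : Matrix (Fin k) (Fin k) ℝ :=
  gramR R s - z • gramR S s -
    (Bmat T P R s)ᵀ * ((T * R * T) - z • 1)⁻¹ * Bmat T P R s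

open Topology Bornology

section Resolvent

variable {ι 𝕜 : Type*} [Fintype ι] [DecidableEq ι] [NormedField 𝕜]

theorem Matrix.continuousAt_inv_of_det_ne_zero {A : Matrix ι ι 𝕜} (hA : A.det ≠ 0) :
    ContinuousAt Inv.inv A :=
  continuousAt_matrix_inv A (Ring.inverse_eq_inv' (G₀ := 𝕜) ▸ continuousAt_inv₀ hA)

theorem Matrix.inv_smul_of_ne_zero (A : Matrix ι ι 𝕜) {z : 𝕜} (hz : z ≠ 0) :
    (z • A)⁻¹ = z⁻¹ • A⁻¹ := by
  by_cases hA : IsUnit A.det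
  · simpa [Units.smul_def] using inv_smul' (A := A) (Units.mk0 z hz) hA
  · have hzA : ¬IsUnit (z • A).det := by
      simpa [det_smul, hz] using hA
    rw [nonsing_inv_apply_not_isUnit _ hA, nonsing_inv_apply_not_isUnit _ hzA, smul_zero]

theorem Matrix.inv_sub_smul_one_eq (M : Matrix ι ι 𝕜) {z : 𝕜} (hz : z ≠ 0) :
    (M - z • 1)⁻¹ = z⁻¹ • (z⁻¹ • M - 1)⁻¹ := by
  have hfactor : M - z • 1 = z • (z⁻¹ • M - 1) := by
    rw [smul_sub, smul_smul, mul_inv_cancel₀ hz, one_smul]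
  rw [hfactor, inv_smul_of_ne_zero _ hz]

theorem Matrix.tendsto_inv_sub_smul_one_cobounded (M : Matrix ι ι 𝕜) :
    Tendsto (fun z : 𝕜 => (M - z • 1)⁻¹) (cobounded 𝕜) (𝓝 0) := by
  have hrecip : Tendsto (fun z : 𝕜 => z⁻¹) (cobounded 𝕜) (𝓝 0) := tendsto_inv₀_cobounded
  have hscaled : Tendsto (fun z : 𝕜 => (z⁻¹ • M - 1)⁻¹) (cobounded 𝕜) (𝓝 (-1)⁻¹) := by
    have hdet : (-1 : Matrix ι ι 𝕜).det ≠ 0 := by simp [det_neg]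
    refine (continuousAt_inv_of_det_ne_zero hdet).tendsto.comp ?_
    simpa using (hrecip.smul_const M).sub_const 1
  rw [← zero_smul 𝕜 ((-1 : Matrix ι ι 𝕜)⁻¹)]
  refine Tendsto.congr' ?_ (hrecip.smul hscaled)
  filter_upwards [eventually_ne_cobounded 0] with z hz
  rw [M.inv_sub_smul_one_eq hz]

end Resolvent

theorem gramR_eq_diagonal {n k : ℕ} {S : Matrix (Fin n) (Fin n) ℝ} {s : Fin k → Fin n → ℝ}
    {μ : Fin k → ℝ} (hon : ∀ i j, s i ⬝ᵥ s j = if i = j then (1:ℝ) else 0)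
    (heig : ∀ i, S.mulVec (s i) = μ i • s i) :
    gramR S s = diagonal μ := by
  ext i j
  simp only [gramR, of_apply, heig, dotProduct_smul, hon, diagonal_apply]
  by_cases h : i = j <;> simp [h]

theorem tendsto_inv_smul_kreinMatrixR_atBot {n k : ℕ} (R S P T : Matrix (Fin n) (Fin n) ℝ)
    (s : Fin k → Fin n → ℝ) :
    Tendsto (fun z : ℝ => z⁻¹ • KreinMatrixR R S P T s z) atBot (𝓝 (-gramR S s)) := by
  set B := Bmat T P R s
  have hrecip : Tendsto (fun z : ℝ => z⁻¹) atBot (𝓝 0) :=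
    tendsto_inv₀_cobounded.mono_left IsOrderBornology.atBot_le_cobounded
  have hresolvent : Tendsto (fun z : ℝ => (T * R * T - z • 1)⁻¹) atBot (𝓝 0) :=
    (T * R * T).tendsto_inv_sub_smul_one_cobounded.mono_left IsOrderBornology.atBot_le_cobounded
  have hcorr : Tendsto (fun z : ℝ => Bᵀ * (T * R * T - z • 1)⁻¹ * B) atBot (𝓝 0) := by
    simpa [Function.comp_def] using (((continuous_const.matrix_mul continuous_id).matrix_mul
      continuous_const).tendsto _).comp hresolvent
  have hexpand : ∀ᶠ z : ℝ in atBot, z⁻¹ • gramR R s - gramR S s -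
      z⁻¹ • (Bᵀ * (T * R * T - z • 1)⁻¹ * B) = z⁻¹ • KreinMatrixR R S P T s z := by
    filter_upwards [eventually_ne_atBot 0] with z hz
    rw [KreinMatrixR, smul_sub, smul_sub, smul_smul, inv_mul_cancel₀ hz, one_smul]
  refine Tendsto.congr' hexpand ?_
  simpa using ((hrecip.smul_const (gramR R s)).sub_const (gramR S s)).sub (hrecip.smul hcorr)

theorem kreinMatrix_atBot_general (n k : ℕ) (S R : Matrix (Fin n) (Fin n) ℝ)
    (s : Fin k → Fin n → ℝ) (μ : Fin k → ℝ)
    (hon : ∀ i j, s i ⬝ᵥ s j = if i = j then (1:ℝ) else 0)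
    (heig : ∀ i, S.mulVec (s i) = μ i • s i) (hμ : ∀ i, μ i < 0)
    (P : Matrix (Fin n) (Fin n) ℝ)
    (T : Matrix (Fin n) (Fin n) ℝ) :
    Tendsto (fun z : ℝ => z⁻¹ • KreinMatrixR R S P T s z) atBot
        (nhds (-(gramR S s))) ∧
      (-(gramR S s)).PosDef := by
  refine ⟨tendsto_inv_smul_kreinMatrixR_atBot R S P T s, ?_⟩
  rw [gramR_eq_diagonal hon heig, diagonal_neg]
  exact PosDef.diagonal fun i => neg_pos.mpr (hμ i)

/-- under the standard Krein-matrix construction, `K(z)/z → -S_N` as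
`z → -∞` along ℝ, and `-S_N` is positive definite; in particular every Krein eigenvalue
is negative for all sufficiently negative real `z`. -/
theorem kreinMatrix_atBot (n k : ℕ) (S R : Matrix (Fin n) (Fin n) ℝ)
    (hS : Sᵀ = S) (hSh : S.IsHermitian) (hR : Rᵀ = R) (hSinv : IsUnit S.det)
    (hkneg : Nat.card {i // hSh.eigenvalues i < 0} = k)
    (s : Fin k → Fin n → ℝ) (μ : Fin k → ℝ)
    (hon : ∀ i j, s i ⬝ᵥ s j = if i = j then (1:ℝ) else 0)
    (heig : ∀ i, S.mulVec (s i) = μ i • s i) (hμ : ∀ i, μ i < 0)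
    (P : Matrix (Fin n) (Fin n) ℝ) (hPsym : Pᵀ = P) (hPidem : P * P = P)
    (hPfix : ∀ x : Fin n → ℝ, P.mulVec x = x ↔ ∀ i, s i ⬝ᵥ x = 0)
    (T : Matrix (Fin n) (Fin n) ℝ) (hT : Tᵀ = T) (hTP : P * T * P = T)
    (hTsq : T * (P * S * P) * T = P)
    (hTpos : ∀ x : Fin n → ℝ, P.mulVec x = x → x ≠ 0 → 0 < x ⬝ᵥ T.mulVec x) :
    Tendsto (fun z : ℝ => z⁻¹ • KreinMatrixR R S P T s z) atBot
        (nhds (-(gramR S s))) ∧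
      (-(gramR S s)).PosDef :=
  kreinMatrix_atBot_general n k S R s μ hon heig hμ P T
end

section
/- Let L₊ and L₋ be real symmetric n×n matrices, both invertible, giving the canonical eigenvalue problem L₊u = −λv, L₋v = λu. Then the number of real positive eigenvalues λ (counted with multiplicity as roots of det(L₊L₋ + λ²I)) is at least |n(L₊) − n(L₋)|. -/
open Matrix Polynomial

/-- The number of negative eigenvalues (with multiplicity) of a real symmetric matrix. -/
noncomputable def negCountR {d : ℕ} (M : Matrix (Fin d) (Fin d) ℝ) (h : M.IsHermitian) : ℕ :=
  Nat.card {i // h.eigenvalues i < 0}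

namespace InstAux

variable {n : ℕ}

local notation "E" => EuclideanSpace ℝ (Fin n)

noncomputable def qf (M : Matrix (Fin n) (Fin n) ℝ) (x : EuclideanSpace ℝ (Fin n)) : ℝ :=
  inner ℝ x (Matrix.toEuclideanLin M x)

noncomputable def posCountR (M : Matrix (Fin n) (Fin n) ℝ) (h : M.IsHermitian) : ℕ :=
  Nat.card {i // 0 < h.eigenvalues i}

noncomputable def zeroCountR (M : Matrix (Fin n) (Fin n) ℝ) (h : M.IsHermitian) : ℕ :=
  Nat.card {i // h.eigenvalues i = 0}

lemma natcard_subtype (p : Fin n → Prop) [DecidablePred p] :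
    Nat.card {i // p i} = (Finset.univ.filter p).card := by
  rw [Nat.card_eq_fintype_card, Fintype.card_subtype]

lemma toEuclideanLin_eigen (M : Matrix (Fin n) (Fin n) ℝ) (h : M.IsHermitian) (i : Fin n) :
    Matrix.toEuclideanLin M (h.eigenvectorBasis i) = h.eigenvalues i • h.eigenvectorBasis i := by
  have := h.mulVec_eigenvectorBasis i
  apply (WithLp.equiv 2 _).injective
  simp [Matrix.toEuclideanLin_apply]
  ext j
  exact congrFun this j

noncomputable def eigSpan {M : Matrix (Fin n) (Fin n) ℝ} (h : M.IsHermitian)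
    (S : Finset (Fin n)) : Submodule ℝ (EuclideanSpace ℝ (Fin n)) :=
  Submodule.span ℝ (h.eigenvectorBasis '' (S : Set (Fin n)))

lemma inner_eq_zero_of_mem_eigSpan {M : Matrix (Fin n) (Fin n) ℝ} (h : M.IsHermitian)
    {S : Finset (Fin n)} {x : EuclideanSpace ℝ (Fin n)} (hx : x ∈ eigSpan h S)
    {j : Fin n} (hj : j ∉ S) : (inner ℝ (h.eigenvectorBasis j) x : ℝ) = 0 := by
  have hle : eigSpan h S ≤ LinearMap.ker ((innerSL ℝ (h.eigenvectorBasis j)).toLinearMap) := by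
    rw [eigSpan, Submodule.span_le]
    rintro y ⟨i, hi, rfl⟩
    have hij : j ≠ i := by rintro rfl; exact hj hi
    simpa using h.eigenvectorBasis.orthonormal.2 hij
  simpa using hle hx

lemma eigSpan_repr {M : Matrix (Fin n) (Fin n) ℝ} (h : M.IsHermitian)
    {S : Finset (Fin n)} {x : EuclideanSpace ℝ (Fin n)} (hx : x ∈ eigSpan h S) :
    x = ∑ i ∈ S, (inner ℝ (h.eigenvectorBasis i) x : ℝ) • h.eigenvectorBasis i := by
  have h1 := (h.eigenvectorBasis).sum_repr x
  have h2 : ∀ i, (h.eigenvectorBasis).repr x i = (inner ℝ (h.eigenvectorBasis i) x : ℝ) := fun i =>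
    (h.eigenvectorBasis).repr_apply_apply x i
  have h3 : ∀ i ∈ Finset.univ, i ∉ S → (h.eigenvectorBasis).repr x i • h.eigenvectorBasis i = 0 :=
    fun i _ hi => by rw [h2, inner_eq_zero_of_mem_eigSpan h hx hi, zero_smul]
  have h4 : ∑ i ∈ S, (inner ℝ (h.eigenvectorBasis i) x : ℝ) • h.eigenvectorBasis i
      = ∑ i ∈ S, (h.eigenvectorBasis).repr x i • h.eigenvectorBasis i :=
    Finset.sum_congr rfl fun i _ => by rw [h2]
  have h5 := Finset.sum_subset (Finset.subset_univ S) h3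
  rw [h4, h5, h1]

lemma norm_sq_eigSpan {M : Matrix (Fin n) (Fin n) ℝ} (h : M.IsHermitian)
    {S : Finset (Fin n)} {x : EuclideanSpace ℝ (Fin n)} (hx : x ∈ eigSpan h S) :
    ‖x‖ ^ 2 = ∑ i ∈ S, (inner ℝ (h.eigenvectorBasis i) x : ℝ) ^ 2 := by
  have horth := h.eigenvectorBasis.orthonormal
  have hrepr := eigSpan_repr h hx
  have : (inner ℝ x x : ℝ) = ∑ i ∈ S, (inner ℝ (h.eigenvectorBasis i) x : ℝ)
      * (inner ℝ (h.eigenvectorBasis i) x : ℝ) := by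
    conv_lhs => rw [hrepr]
    rw [horth.inner_sum]
    simp
  rw [← real_inner_self_eq_norm_sq, this]
  exact Finset.sum_congr rfl fun i _ => (sq _).symm

lemma qf_eigSpan {M N : Matrix (Fin n) (Fin n) ℝ} (h : M.IsHermitian)
    {S : Finset (Fin n)} (μ : Fin n → ℝ)
    (hact : ∀ i ∈ S, Matrix.toEuclideanLin N (h.eigenvectorBasis i)
      = μ i • h.eigenvectorBasis i)
    {x : EuclideanSpace ℝ (Fin n)} (hx : x ∈ eigSpan h S) :
    qf N x = ∑ i ∈ S, μ i * (inner ℝ (h.eigenvectorBasis i) x : ℝ) ^ 2 := by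
  have horth := h.eigenvectorBasis.orthonormal
  have hrepr := eigSpan_repr h hx
  have hTx : Matrix.toEuclideanLin N x = ∑ i ∈ S,
      ((inner ℝ (h.eigenvectorBasis i) x : ℝ) * μ i) • h.eigenvectorBasis i := by
    conv_lhs => rw [hrepr]
    rw [map_sum]
    exact Finset.sum_congr rfl fun i hi => by
      rw [LinearMap.map_smul, hact i hi, smul_smul]
  rw [qf, hTx]
  conv_lhs => rw [hrepr]
  rw [horth.inner_sum]
  simp only [RCLike.star_def, conj_trivial]
  exact Finset.sum_congr rfl fun i _ => by rw [← hrepr]; ring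

lemma finrank_eigSpan {M : Matrix (Fin n) (Fin n) ℝ} (h : M.IsHermitian)
    (S : Finset (Fin n)) : Module.finrank ℝ (eigSpan h S) = S.card := by
  classical
  have hon : Orthonormal ℝ (fun i : {i // i ∈ S} => h.eigenvectorBasis i) :=
    h.eigenvectorBasis.orthonormal.comp _ Subtype.val_injective
  have hli := hon.linearIndependent
  have hrange : Set.range (fun i : {i // i ∈ S} => h.eigenvectorBasis i)
      = h.eigenvectorBasis '' (S : Set (Fin n)) := by
    ext y; constructor
    · rintro ⟨⟨i, hi⟩, rfl⟩; exact ⟨i, hi, rfl⟩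
    · rintro ⟨i, hi, rfl⟩; exact ⟨⟨i, hi⟩, rfl⟩
  have := finrank_span_eq_card hli
  rw [eigSpan, ← hrange, this, Fintype.card_coe]

lemma negCount_eq_card (M : Matrix (Fin n) (Fin n) ℝ) (h : M.IsHermitian) :
    negCountR M h = (Finset.univ.filter (fun i => h.eigenvalues i < 0)).card :=
  natcard_subtype _

lemma posCount_eq_card (M : Matrix (Fin n) (Fin n) ℝ) (h : M.IsHermitian) :
    posCountR M h = (Finset.univ.filter (fun i => 0 < h.eigenvalues i)).card :=
  natcard_subtype _

lemma zeroCount_eq_card (M : Matrix (Fin n) (Fin n) ℝ) (h : M.IsHermitian) :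
    zeroCountR M h = (Finset.univ.filter (fun i => h.eigenvalues i = 0)).card :=
  natcard_subtype _

lemma count_partition (M : Matrix (Fin n) (Fin n) ℝ) (h : M.IsHermitian) :
    negCountR M h + zeroCountR M h + posCountR M h = n := by
  classical
  rw [negCount_eq_card, zeroCount_eq_card, posCount_eq_card]
  have hU : (Finset.univ.filter (fun i => h.eigenvalues i < 0)) ∪
      ((Finset.univ.filter (fun i => h.eigenvalues i = 0)) ∪
       (Finset.univ.filter (fun i => 0 < h.eigenvalues i))) = Finset.univ := by
    ext i
    simp only [Finset.mem_union, Finset.mem_filter, Finset.mem_univ, true_and, iff_true]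
    rcases lt_trichotomy (h.eigenvalues i) 0 with hc | hc | hc
    · exact Or.inl hc
    · exact Or.inr (Or.inl hc)
    · exact Or.inr (Or.inr hc)
  have hd1 : Disjoint (Finset.univ.filter (fun i => h.eigenvalues i = 0))
      (Finset.univ.filter (fun i => 0 < h.eigenvalues i)) := by
    rw [Finset.disjoint_left]
    intro a ha hb
    simp only [Finset.mem_filter] at ha hb
    linarith [ha.2, hb.2]
  have hd2 : Disjoint (Finset.univ.filter (fun i => h.eigenvalues i < 0))
      ((Finset.univ.filter (fun i => h.eigenvalues i = 0)) ∪
       (Finset.univ.filter (fun i => 0 < h.eigenvalues i))) := by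
    rw [Finset.disjoint_left]
    intro a ha hb
    simp only [Finset.mem_filter, Finset.mem_union] at ha hb
    rcases hb with hb | hb <;> linarith [ha.2, hb.2]
  have := congrArg Finset.card hU
  rw [Finset.card_union_of_disjoint hd2, Finset.card_union_of_disjoint hd1] at this
  simpa [add_assoc] using this

lemma eigenvalues_ne_zero_of_det (M : Matrix (Fin n) (Fin n) ℝ) (h : M.IsHermitian)
    (hdet : M.det ≠ 0) : ∀ i, h.eigenvalues i ≠ 0 := by
  have hprod := h.det_eq_prod_eigenvalues
  intro i hi
  apply hdet
  rw [hprod]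
  rw [Finset.prod_eq_zero (Finset.mem_univ i)]
  simp [hi]

lemma zeroCount_eq_zero_of_det (M : Matrix (Fin n) (Fin n) ℝ) (h : M.IsHermitian)
    (hdet : M.det ≠ 0) : zeroCountR M h = 0 := by
  classical
  rw [zeroCount_eq_card]
  rw [Finset.card_eq_zero, Finset.filter_eq_empty_iff]
  exact fun {i} _ => eigenvalues_ne_zero_of_det M h hdet i

lemma exists_bound (B : Matrix (Fin n) (Fin n) ℝ) :
    ∃ C : ℝ, 0 ≤ C ∧ ∀ x : EuclideanSpace ℝ (Fin n), |qf B x| ≤ C * ‖x‖ ^ 2 := by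
  set T := LinearMap.toContinuousLinearMap (Matrix.toEuclideanLin B) with hT
  refine ⟨‖T‖, norm_nonneg _, fun x => ?_⟩
  have h1 : |qf B x| ≤ ‖x‖ * ‖Matrix.toEuclideanLin B x‖ := abs_real_inner_le_norm _ _
  have h2 : ‖Matrix.toEuclideanLin B x‖ = ‖T x‖ := by rw [hT]; rfl
  have h3 : ‖T x‖ ≤ ‖T‖ * ‖x‖ := T.le_opNorm x
  rw [h2] at h1
  nlinarith [norm_nonneg x, norm_nonneg (T x)]

lemma exists_c {S : Finset (Fin n)} (μ : Fin n → ℝ) (hneg : ∀ i ∈ S, μ i < 0) :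
    ∃ c : ℝ, 0 < c ∧ ∀ i ∈ S, μ i ≤ -c := by
  rcases S.eq_empty_or_nonempty with rfl | hne
  · exact ⟨1, one_pos, fun i hi => absurd hi (Finset.notMem_empty i)⟩
  · refine ⟨-(S.sup' hne μ), ?_, fun i hi => ?_⟩
    · have : S.sup' hne μ < 0 := (Finset.sup'_lt_iff hne).2 hneg
      linarith
    · rw [neg_neg]; exact Finset.le_sup' μ hi

lemma finrank_le_negCount (M : Matrix (Fin n) (Fin n) ℝ) (h : M.IsHermitian)
    (W : Submodule ℝ (EuclideanSpace ℝ (Fin n)))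
    (hW : ∀ x ∈ W, x ≠ 0 → qf M x < 0) :
    Module.finrank ℝ W ≤ negCountR M h := by
  classical
  by_contra hlt
  push_neg at hlt
  set S : Finset (Fin n) := Finset.univ.filter (fun i => 0 ≤ h.eigenvalues i) with hS
  set W' := eigSpan h S with hW'
  have hrk' : Module.finrank ℝ W' = S.card := finrank_eigSpan h S
  have hcards : (Finset.univ.filter (fun i => h.eigenvalues i < 0)).card + S.card = n := by
    have := Finset.card_filter_add_card_filter_not
      (s := (Finset.univ : Finset (Fin n))) (p := fun i => h.eigenvalues i < 0)
    simp only [Finset.card_univ, Fintype.card_fin] at this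
    have hSeq : S = Finset.univ.filter (fun a => ¬ h.eigenvalues a < 0) := by
      rw [hS]
      apply Finset.filter_congr
      intro i _
      simp [not_lt]
    rw [hSeq]
    omega
  have hq' : ∀ x ∈ W', 0 ≤ qf M x := by
    intro x hx
    rw [qf_eigSpan h h.eigenvalues (fun i _ => toEuclideanLin_eigen M h i) hx]
    apply Finset.sum_nonneg
    intro i hi
    have : 0 ≤ h.eigenvalues i := (Finset.mem_filter.1 hi).2
    positivity
  have hsum := Submodule.finrank_sup_add_finrank_inf_eq W W'
  have hsup : Module.finrank ℝ ↥(W ⊔ W') ≤ n := by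
    have h1 := Submodule.finrank_le (W ⊔ W')
    simpa [finrank_euclideanSpace] using h1
  have hinf : 0 < Module.finrank ℝ ↥(W ⊓ W') := by
    have hν := negCount_eq_card M h
    omega
  have hnt : Nontrivial ↥(W ⊓ W') := by
    by_contra hnt
    have hss : Subsingleton ↥(W ⊓ W') := not_nontrivial_iff_subsingleton.1 hnt
    have := Module.finrank_zero_of_subsingleton (R := ℝ) (M := ↥(W ⊓ W'))
    omega
  obtain ⟨⟨x, hxmem⟩, hx0⟩ := exists_ne (0 : ↥(W ⊓ W'))
  have hxne : x ≠ 0 := fun hx => hx0 (Subtype.ext (by simpa using hx))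
  have h1 := hW x (hxmem.1) hxne
  have h2 := hq' x (hxmem.2)
  linarith
  
lemma finrank_le_posCount (M : Matrix (Fin n) (Fin n) ℝ) (h : M.IsHermitian)
    (W : Submodule ℝ (EuclideanSpace ℝ (Fin n)))
    (hW : ∀ x ∈ W, x ≠ 0 → 0 < qf M x) :
    Module.finrank ℝ W ≤ posCountR M h := by
  classical
  by_contra hlt
  push_neg at hlt
  set S : Finset (Fin n) := Finset.univ.filter (fun i => h.eigenvalues i ≤ 0) with hS
  set W' := eigSpan h S with hW'
  have hrk' : Module.finrank ℝ W' = S.card := finrank_eigSpan h S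
  have hcards : (Finset.univ.filter (fun i => 0 < h.eigenvalues i)).card + S.card = n := by
    have := Finset.card_filter_add_card_filter_not
      (s := (Finset.univ : Finset (Fin n))) (p := fun i => 0 < h.eigenvalues i)
    simp only [Finset.card_univ, Fintype.card_fin] at this
    have hSeq : S = Finset.univ.filter (fun a => ¬ 0 < h.eigenvalues a) := by
      rw [hS]
      apply Finset.filter_congr
      intro i _
      simp [not_lt]
    rw [hSeq]
    omega
  have hq' : ∀ x ∈ W', qf M x ≤ 0 := by
    intro x hx
    rw [qf_eigSpan h h.eigenvalues (fun i _ => toEuclideanLin_eigen M h i) hx]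
    apply Finset.sum_nonpos
    intro i hi
    have h1 : h.eigenvalues i ≤ 0 := (Finset.mem_filter.1 hi).2
    have h2 : (0:ℝ) ≤ (inner ℝ (h.eigenvectorBasis i) x : ℝ) ^ 2 := sq_nonneg _
    exact mul_nonpos_of_nonpos_of_nonneg h1 h2
  have hsum := Submodule.finrank_sup_add_finrank_inf_eq W W'
  have hsup : Module.finrank ℝ ↥(W ⊔ W') ≤ n := by
    have h1 := Submodule.finrank_le (W ⊔ W')
    simpa [finrank_euclideanSpace] using h1
  have hinf : 0 < Module.finrank ℝ ↥(W ⊓ W') := by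
    have hν := posCount_eq_card M h
    omega
  have hnt : Nontrivial ↥(W ⊓ W') := by
    by_contra hnt
    have hss : Subsingleton ↥(W ⊓ W') := not_nontrivial_iff_subsingleton.1 hnt
    have := Module.finrank_zero_of_subsingleton (R := ℝ) (M := ↥(W ⊓ W'))
    omega
  obtain ⟨⟨x, hxmem⟩, hx0⟩ := exists_ne (0 : ↥(W ⊓ W'))
  have hxne : x ≠ 0 := fun hx => hx0 (Subtype.ext (by simpa using hx))
  have h1 := hW x (hxmem.1) hxne
  have h2 := hq' x (hxmem.2)
  linarith

lemma exists_neg_subspace (M : Matrix (Fin n) (Fin n) ℝ) (h : M.IsHermitian) :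
    ∃ (W : Submodule ℝ (EuclideanSpace ℝ (Fin n))) (c : ℝ), 0 < c ∧
      Module.finrank ℝ W = negCountR M h ∧ ∀ x ∈ W, qf M x ≤ -c * ‖x‖ ^ 2 := by
  classical
  set S : Finset (Fin n) := Finset.univ.filter (fun i => h.eigenvalues i < 0) with hS
  obtain ⟨c, hc, hcle⟩ := exists_c (S := S) h.eigenvalues
    (fun i hi => (Finset.mem_filter.1 hi).2)
  refine ⟨eigSpan h S, c, hc, ?_, ?_⟩
  · rw [finrank_eigSpan, negCount_eq_card]
  · intro x hx
    rw [qf_eigSpan h h.eigenvalues (fun i _ => toEuclideanLin_eigen M h i) hx,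
      norm_sq_eigSpan h hx, Finset.mul_sum]
    apply Finset.sum_le_sum
    intro i hi
    have h1 := hcle i hi
    have h2 : (0:ℝ) ≤ (inner ℝ (h.eigenvectorBasis i) x : ℝ) ^ 2 := sq_nonneg _
    nlinarith

lemma exists_pos_subspace (M : Matrix (Fin n) (Fin n) ℝ) (h : M.IsHermitian) :
    ∃ (W : Submodule ℝ (EuclideanSpace ℝ (Fin n))) (c : ℝ), 0 < c ∧
      Module.finrank ℝ W = posCountR M h ∧ ∀ x ∈ W, c * ‖x‖ ^ 2 ≤ qf M x := by
  classical
  set S : Finset (Fin n) := Finset.univ.filter (fun i => 0 < h.eigenvalues i) with hS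
  obtain ⟨c, hc, hcle⟩ := exists_c (S := S) (fun i => -h.eigenvalues i)
    (fun i hi => by simpa using (Finset.mem_filter.1 hi).2)
  refine ⟨eigSpan h S, c, hc, ?_, ?_⟩
  · rw [finrank_eigSpan, posCount_eq_card]
  · intro x hx
    rw [qf_eigSpan h h.eigenvalues (fun i _ => toEuclideanLin_eigen M h i) hx,
      norm_sq_eigSpan h hx, Finset.mul_sum]
    apply Finset.sum_le_sum
    intro i hi
    have h1 := hcle i hi
    have h2 : (0:ℝ) ≤ (inner ℝ (h.eigenvectorBasis i) x : ℝ) ^ 2 := sq_nonneg _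
    nlinarith

lemma qf_add_smul (M B : Matrix (Fin n) (Fin n) ℝ) (s : ℝ) (x : EuclideanSpace ℝ (Fin n)) :
    qf (M + s • B) x = qf M x + s * qf B x := by
  have h1 : Matrix.toEuclideanLin (M + s • B)
      = Matrix.toEuclideanLin M + s • Matrix.toEuclideanLin B := by
    rw [_root_.map_add]
    congr 1
    exact LinearEquiv.map_smul (Matrix.toEuclideanLin) s B
  simp only [qf, h1, LinearMap.add_apply, LinearMap.smul_apply,
    inner_add_right, real_inner_smul_right]

lemma pert (M B : Matrix (Fin n) (Fin n) ℝ) (h : M.IsHermitian) :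
    ∃ δ : ℝ, 0 < δ ∧ ∀ s : ℝ, |s| < δ → ∀ h' : (M + s • B).IsHermitian,
      negCountR M h ≤ negCountR _ h' ∧ posCountR M h ≤ posCountR _ h' := by
  obtain ⟨W₁, c₁, hc₁, hrk₁, hb₁⟩ := exists_neg_subspace M h
  obtain ⟨W₂, c₂, hc₂, hrk₂, hb₂⟩ := exists_pos_subspace M h
  obtain ⟨C, hC0, hC⟩ := exists_bound (n := n) B
  refine ⟨min c₁ c₂ / (C + 1), by positivity, fun s hs h' => ?_⟩
  have hsC : |s| * C < min c₁ c₂ := by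
    have h1 : |s| * (C + 1) < min c₁ c₂ / (C + 1) * (C + 1) := by
      apply mul_lt_mul_of_pos_right hs
      linarith
    have h2 : min c₁ c₂ / (C + 1) * (C + 1) = min c₁ c₂ := by
      field_simp
    nlinarith [abs_nonneg s]
  constructor
  · rw [← hrk₁]
    apply finrank_le_negCount _ h'
    intro x hx hxne
    have hb := hb₁ x hx
    have hqb : s * qf B x ≤ |s| * C * ‖x‖ ^ 2 := by
      calc s * qf B x ≤ |s * qf B x| := le_abs_self _
        _ = |s| * |qf B x| := abs_mul _ _
        _ ≤ |s| * (C * ‖x‖ ^ 2) := by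
            apply mul_le_mul_of_nonneg_left (hC x) (abs_nonneg s)
        _ = |s| * C * ‖x‖ ^ 2 := by ring
    rw [qf_add_smul]
    have hxpos : 0 < ‖x‖ ^ 2 := pow_pos (norm_pos_iff.mpr hxne) 2
    have hmin : |s| * C < c₁ := lt_of_lt_of_le hsC (min_le_left _ _)
    nlinarith
  · rw [← hrk₂]
    apply finrank_le_posCount _ h'
    intro x hx hxne
    have hb := hb₂ x hx
    have hqb : -(|s| * C * ‖x‖ ^ 2) ≤ s * qf B x := by
      have h1 : |s * qf B x| ≤ |s| * C * ‖x‖ ^ 2 := by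
        rw [abs_mul]
        calc |s| * |qf B x| ≤ |s| * (C * ‖x‖ ^ 2) :=
              mul_le_mul_of_nonneg_left (hC x) (abs_nonneg s)
          _ = |s| * C * ‖x‖ ^ 2 := by ring
      linarith [neg_abs_le (s * qf B x)]
    rw [qf_add_smul]
    have hxpos : 0 < ‖x‖ ^ 2 := pow_pos (norm_pos_iff.mpr hxne) 2
    have hmin : |s| * C < c₂ := lt_of_lt_of_le hsC (min_le_right _ _)
    nlinarith

lemma negCount_congr {M M' : Matrix (Fin n) (Fin n) ℝ} (e : M = M')
    (h : M.IsHermitian) (h' : M'.IsHermitian) : negCountR M h = negCountR M' h' := by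
  subst e; rfl

lemma qf_smul (M : Matrix (Fin n) (Fin n) ℝ) (c : ℝ) (x : EuclideanSpace ℝ (Fin n)) :
    qf (c • M) x = c * qf M x := by
  have h1 := qf_add_smul 0 M c x
  have h0 : qf (0 : Matrix (Fin n) (Fin n) ℝ) x = 0 := by
    simp [qf]
  rw [zero_add] at h1
  rw [h1, h0, zero_add]

lemma negCount_smul_le (M : Matrix (Fin n) (Fin n) ℝ) (h : M.IsHermitian) (c : ℝ)
    (hc : 0 < c) (h' : (c • M).IsHermitian) : negCountR M h ≤ negCountR _ h' := by
  obtain ⟨W, c₁, hc₁, hrk, hb⟩ := exists_neg_subspace M h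
  rw [← hrk]
  apply finrank_le_negCount _ h'
  intro x hx hxne
  have hb1 := hb x hx
  have hxpos : 0 < ‖x‖ ^ 2 := pow_pos (norm_pos_iff.mpr hxne) 2
  rw [qf_smul]
  have hneg : qf M x < 0 := lt_of_le_of_lt hb1 (by nlinarith)
  exact mul_neg_of_pos_of_neg hc hneg

lemma negCount_smul (M : Matrix (Fin n) (Fin n) ℝ) (h : M.IsHermitian) (c : ℝ)
    (hc : 0 < c) (h' : (c • M).IsHermitian) : negCountR _ h' = negCountR M h := by
  have h2 : (c⁻¹ • (c • M)).IsHermitian := by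
    have : c⁻¹ • (c • M) = M := by
      rw [smul_smul, inv_mul_cancel₀ (ne_of_gt hc), one_smul]
    rw [this]; exact h
  have hle1 := negCount_smul_le M h c hc h'
  have hle2 := negCount_smul_le (c • M) h' c⁻¹ (by positivity) h2
  have he : negCountR _ h2 = negCountR M h := by
    apply negCount_congr
    rw [smul_smul, inv_mul_cancel₀ (ne_of_gt hc), one_smul]
  omega

lemma toEuclideanLin_of_mulVec {N : Matrix (Fin n) (Fin n) ℝ} {x : EuclideanSpace ℝ (Fin n)}
    {μ : ℝ} (hmv : N *ᵥ ⇑x = μ • ⇑x) : Matrix.toEuclideanLin N x = μ • x := by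
  apply (WithLp.equiv 2 _).injective
  simp [Matrix.toEuclideanLin_apply]
  ext j
  exact congrFun hmv j

lemma mulVec_inv_eigen (M : Matrix (Fin n) (Fin n) ℝ) (h : M.IsHermitian)
    (hdet : M.det ≠ 0) (i : Fin n) :
    M⁻¹ *ᵥ ⇑(h.eigenvectorBasis i) = (h.eigenvalues i)⁻¹ • ⇑(h.eigenvectorBasis i) := by
  have h1 := h.mulVec_eigenvectorBasis i
  have hlam := eigenvalues_ne_zero_of_det M h hdet i
  have h2 : M⁻¹ *ᵥ (M *ᵥ ⇑(h.eigenvectorBasis i)) = ⇑(h.eigenvectorBasis i) := by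
    rw [mulVec_mulVec, Matrix.nonsing_inv_mul M (isUnit_iff_ne_zero.mpr hdet), one_mulVec]
  rw [h1, mulVec_smul] at h2
  calc M⁻¹ *ᵥ ⇑(h.eigenvectorBasis i)
      = (h.eigenvalues i)⁻¹ • (h.eigenvalues i • (M⁻¹ *ᵥ ⇑(h.eigenvectorBasis i))) := by
        rw [smul_smul, inv_mul_cancel₀ hlam, one_smul]
    _ = (h.eigenvalues i)⁻¹ • ⇑(h.eigenvectorBasis i) := by rw [h2]

lemma negCount_le_inv (M : Matrix (Fin n) (Fin n) ℝ) (h : M.IsHermitian)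
    (hdet : M.det ≠ 0) (h' : (M⁻¹).IsHermitian) : negCountR M h ≤ negCountR _ h' := by
  classical
  set S : Finset (Fin n) := Finset.univ.filter (fun i => h.eigenvalues i < 0) with hS
  obtain ⟨c, hc, hcle⟩ := exists_c (S := S) (fun i => (h.eigenvalues i)⁻¹)
    (fun i hi => inv_lt_zero.mpr (Finset.mem_filter.1 hi).2)
  have hrk := finrank_eigSpan h S
  have hν := negCount_eq_card M h
  rw [← hS] at hν
  rw [← hν] at hrk
  rw [← hrk]
  apply finrank_le_negCount _ h'
  intro x hx hxne
  have hact : ∀ i ∈ S, Matrix.toEuclideanLin M⁻¹ (h.eigenvectorBasis i)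
      = (h.eigenvalues i)⁻¹ • h.eigenvectorBasis i :=
    fun i _ => toEuclideanLin_of_mulVec (mulVec_inv_eigen M h hdet i)
  have hq := qf_eigSpan h (fun i => (h.eigenvalues i)⁻¹) hact hx
  have hn := norm_sq_eigSpan h hx
  have hxpos : 0 < ‖x‖ ^ 2 := pow_pos (norm_pos_iff.mpr hxne) 2
  have hle : qf M⁻¹ x ≤ -c * ‖x‖ ^ 2 := by
    rw [hq, hn, Finset.mul_sum]
    apply Finset.sum_le_sum
    intro i hi
    have h1 := hcle i hi
    have h2 : (0:ℝ) ≤ (inner ℝ (h.eigenvectorBasis i) x : ℝ) ^ 2 := sq_nonneg _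
    nlinarith
  nlinarith

lemma negCount_inv (M : Matrix (Fin n) (Fin n) ℝ) (h : M.IsHermitian)
    (hdet : M.det ≠ 0) (h' : (M⁻¹).IsHermitian) : negCountR _ h' = negCountR M h := by
  have hdet' : (M⁻¹).det ≠ 0 := by
    rw [Matrix.det_nonsing_inv, Ring.inverse_eq_inv]
    exact inv_ne_zero hdet
  have hMinvinv : (M⁻¹)⁻¹ = M := Matrix.nonsing_inv_nonsing_inv M (isUnit_iff_ne_zero.mpr hdet)
  have h'' : ((M⁻¹)⁻¹).IsHermitian := by rw [hMinvinv]; exact h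
  have hle1 := negCount_le_inv M h hdet h'
  have hle2 := negCount_le_inv (M⁻¹) h' hdet' h''
  have he : negCountR _ h'' = negCountR M h := negCount_congr hMinvinv h'' h
  omega

lemma hermitian_smul_real {A : Matrix (Fin n) (Fin n) ℝ} (hA : A.IsHermitian) (t : ℝ) :
    (t • A).IsHermitian := by
  unfold Matrix.IsHermitian at *
  rw [Matrix.conjTranspose_smul, hA]
  norm_num

lemma near_line (M₀ B : Matrix (Fin n) (Fin n) ℝ) (h₀ : M₀.IsHermitian) :
    ∃ δ : ℝ, 0 < δ ∧ ∀ s : ℝ, |s| < δ → ∀ hs' : (M₀ + s • B).IsHermitian,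
      (M₀ + s • B).det ≠ 0 →
      negCountR M₀ h₀ ≤ negCountR _ hs' ∧
      negCountR _ hs' ≤ negCountR M₀ h₀ + zeroCountR M₀ h₀ := by
  obtain ⟨δ, hδ, hpert⟩ := pert M₀ B h₀
  refine ⟨δ, hδ, fun s hs hs' hdet => ?_⟩
  obtain ⟨h1, h2⟩ := hpert s hs hs'
  refine ⟨h1, ?_⟩
  have hz' : zeroCountR _ hs' = 0 := zeroCount_eq_zero_of_det _ hs' hdet
  have hp1 := count_partition _ hs'
  have hp0 := count_partition _ h₀
  omega

lemma det_poly_dvd (M₀ B : Matrix (Fin n) (Fin n) ℝ) (h₀ : M₀.IsHermitian) (t₀ : ℝ)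
    (P : ℝ[X]) (hP : ∀ t : ℝ, P.eval t = (M₀ + (t - t₀) • B).det) :
    (X - C t₀) ^ (zeroCountR M₀ h₀) ∣ P := by
  classical
  set U : Matrix (Fin n) (Fin n) ℝ := (h₀.eigenvectorUnitary : Matrix (Fin n) (Fin n) ℝ) with hU
  have hU1 : star U * U = 1 := Unitary.coe_star_mul_self h₀.eigenvectorUnitary
  have hU2 : U * star U = 1 := Unitary.coe_mul_star_self h₀.eigenvectorUnitary
  set D : Matrix (Fin n) (Fin n) ℝ := Matrix.diagonal h₀.eigenvalues with hD
  have hspec : star U * M₀ * U = D := by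
    have := h₀.conjStarAlgAut_star_eigenvectorUnitary
    rw [Unitary.conjStarAlgAut_star_apply] at this
    rw [hD]
    rw [this]
    congr 1
  set B' : Matrix (Fin n) (Fin n) ℝ := star U * B * U with hB'
  -- determinant identity
  have hdet : ∀ s : ℝ, (M₀ + s • B).det = (D + s • B').det := by
    intro s
    have hconj : star U * (M₀ + s • B) * U = D + s • B' := by
      rw [Matrix.mul_add, Matrix.add_mul, hspec, hB', Matrix.mul_smul, Matrix.smul_mul]
    have h1 : ((star U * (M₀ + s • B)) * U).det = (star U).det * (M₀ + s • B).det * U.det := by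
      rw [Matrix.det_mul, Matrix.det_mul]
    have h2 : (star U).det * U.det = 1 := by
      rw [← Matrix.det_mul, hU1, Matrix.det_one]
    calc (M₀ + s • B).det = ((star U).det * U.det) * (M₀ + s • B).det := by rw [h2, one_mul]
      _ = (star U).det * (M₀ + s • B).det * U.det := by ring
      _ = ((star U * (M₀ + s • B)) * U).det := h1.symm
      _ = (D + s • B').det := by rw [hconj]
  -- the polynomial matrix
  set F : Matrix (Fin n) (Fin n) ℝ[X] :=
    Matrix.of (fun i j => C (D i j) + X * C (B' i j)) with hF
  set G : ℝ[X] := F.det with hG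
  have hGeval : ∀ s : ℝ, G.eval s = (D + s • B').det := by
    intro s
    rw [hG]
    have h1 := (Polynomial.evalRingHom s).map_det F
    simp only [RingHom.mapMatrix_apply] at h1
    rw [show Polynomial.evalRingHom s F.det = G.eval s from rfl] at h1
    rw [h1]
    congr 1
    ext i j
    simp only [hF, Matrix.map_apply, Matrix.of_apply, Polynomial.eval_add,
      Polynomial.eval_mul, Polynomial.eval_C, Polynomial.eval_X,
      Matrix.add_apply, Matrix.smul_apply, smul_eq_mul, Polynomial.coe_evalRingHom,
      _root_.map_add, _root_.map_mul, Polynomial.eval_C, Polynomial.eval_X]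
  -- P = G.comp (X - C t₀)
  have hPG : P = G.comp (X - C t₀) := by
    apply Polynomial.funext
    intro t
    rw [hP t, Polynomial.eval_comp]
    simp only [Polynomial.eval_sub, Polynomial.eval_X, Polynomial.eval_C]
    rw [hGeval (t - t₀), hdet (t - t₀)]
  -- X ^ z divides G
  set Z : Finset (Fin n) := Finset.univ.filter (fun i => h₀.eigenvalues i = 0) with hZ
  have hzc : zeroCountR M₀ h₀ = Z.card := zeroCount_eq_card M₀ h₀
  have hdvdG : X ^ Z.card ∣ G := by
    set v : Fin n → ℝ[X] := fun j => if h₀.eigenvalues j = 0 then X else 1 with hv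
    set A' : Matrix (Fin n) (Fin n) ℝ[X] :=
      Matrix.of (fun i j => if h₀.eigenvalues j = 0 then C (B' i j)
        else C (D i j) + X * C (B' i j)) with hA'
    have hFA : F = Matrix.of (fun i j => v j * A' i j) := by
      ext i j
      by_cases hj : h₀.eigenvalues j = 0
      · have hDij : D i j = 0 := by
          rw [hD]
          by_cases hij : i = j
          · subst hij
            simp [Matrix.diagonal_apply_eq, hj]
          · simp [Matrix.diagonal_apply_ne _ hij]
        simp [hF, hA', hv, hj, hDij]
      · simp [hF, hA', hv, hj]
    have hprod : (∏ j, v j) = X ^ Z.card := by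
      rw [hv, ← Finset.prod_filter_mul_prod_filter_not Finset.univ
        (fun j => h₀.eigenvalues j = 0)]
      rw [Finset.prod_congr rfl (fun j hj => if_pos (Finset.mem_filter.1 hj).2),
        Finset.prod_congr rfl (fun j hj => if_neg (Finset.mem_filter.1 hj).2)]
      simp [hZ]
    have : G = X ^ Z.card * A'.det := by
      rw [hG, hFA, Matrix.det_mul_row v A', hprod]
    exact ⟨A'.det, this⟩
  obtain ⟨R, hR⟩ := hdvdG
  rw [hzc, hPG, hR]
  refine ⟨R.comp (X - C t₀), ?_⟩
  rw [Polynomial.mul_comp, Polynomial.pow_comp, Polynomial.X_comp]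

lemma filter_three (s : Multiset ℝ) (p q w r : ℝ → Prop)
    [DecidablePred p] [DecidablePred q] [DecidablePred w] [DecidablePred r]
    (hpr : ∀ x, p x → r x) (hqr : ∀ x, q x → r x) (hwr : ∀ x, w x → r x)
    (hpq : ∀ x, ¬(p x ∧ q x)) (hpw : ∀ x, ¬(p x ∧ w x)) (hqw : ∀ x, ¬(q x ∧ w x)) :
    (s.filter p).card + (s.filter q).card + (s.filter w).card ≤ (s.filter r).card := by
  refine Multiset.induction_on s ?_ ?_
  · simp
  · intro a t ih
    have key : (if p a then 1 else 0) + (if q a then 1 else 0) + (if w a then 1 else 0)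
        ≤ (if r a then (1:ℕ) else 0) := by
      by_cases hp : p a
      · have hrr := hpr a hp
        have hq' : ¬ q a := fun hq => hpq a ⟨hp, hq⟩
        have hw' : ¬ w a := fun hw => hpw a ⟨hp, hw⟩
        simp [hp, hq', hw', hrr]
      · by_cases hq : q a
        · have hrr := hqr a hq
          have hw' : ¬ w a := fun hw => hqw a ⟨hq, hw⟩
          simp [hp, hq, hw', hrr]
        · by_cases hw : w a
          · simp [hp, hq, hw, hwr a hw]
          · simp [hp, hq, hw]
    simp only [Multiset.filter_cons, Multiset.card_add, apply_ite Multiset.card,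
      Multiset.card_singleton, Multiset.card_zero]
    omega

lemma card_filter_eq (s : Multiset ℝ) (t₀ : ℝ) :
    (s.filter (· = t₀)).card = s.count t₀ := by
  rw [Multiset.filter_eq', Multiset.card_replicate]

section Main

variable {n : ℕ} (Lp Lm : Matrix (Fin n) (Fin n) ℝ)

noncomputable def St (t : ℝ) : Matrix (Fin n) (Fin n) ℝ := Lp - t • Lm⁻¹

noncomputable def Pp : ℝ[X] := C ((Lm.det)⁻¹ * (-1:ℝ)^n) * (Lm * Lp).charpoly

lemma hSt (hLp : Lp.IsHermitian) (hLm : Lm.IsHermitian) (t : ℝ) : (St Lp Lm t).IsHermitian :=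
  Matrix.IsHermitian.sub hLp (hermitian_smul_real hLm.inv t)

noncomputable def nuF (hLp : Lp.IsHermitian) (hLm : Lm.IsHermitian) (t : ℝ) : ℕ :=
  negCountR (St Lp Lm t) (hSt Lp Lm hLp hLm t)

lemma hline (t t₀ : ℝ) : St Lp Lm t = St Lp Lm t₀ + (t - t₀) • (-Lm⁻¹) := by
  unfold St
  rw [smul_neg, ← sub_eq_add_neg, sub_sub, ← add_smul]
  congr 2
  ring

lemma hPeval (hLminv : IsUnit Lm.det) (t : ℝ) : (Pp Lp Lm).eval t = (St Lp Lm t).det := by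
  have hdetLm : Lm.det ≠ 0 := by
    intro h0
    rw [h0] at hLminv
    exact (not_isUnit_zero hLminv)
  have hchar : (Lm * Lp).charpoly.eval t
      = (t • (1 : Matrix (Fin n) (Fin n) ℝ) - Lm * Lp).det := by
    rw [Matrix.charpoly]
    have h1 := (Polynomial.evalRingHom t).map_det (Matrix.charmatrix (Lm * Lp))
    simp only [RingHom.mapMatrix_apply] at h1
    rw [show (Polynomial.evalRingHom t) (Matrix.charmatrix (Lm * Lp)).det
      = ((Lm * Lp).charmatrix.det).eval t from rfl] at h1
    rw [h1]
    congr 1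
    ext i j
    by_cases hij : i = j
    · subst hij
      simp [Matrix.charmatrix_apply_eq, Matrix.sub_apply, Matrix.smul_apply,
        Matrix.one_apply_eq, smul_eq_mul]
    · simp [Matrix.charmatrix_apply_ne _ _ _ hij, Matrix.sub_apply, Matrix.smul_apply,
        Matrix.one_apply_ne hij, smul_eq_mul]
  have h2 : Lm * St Lp Lm t = Lm * Lp - t • (1 : Matrix (Fin n) (Fin n) ℝ) := by
    unfold St
    rw [Matrix.mul_sub, Matrix.mul_smul, Matrix.mul_nonsing_inv Lm hLminv]
  have h3 : Lm.det * (St Lp Lm t).det = (Lm * Lp - t • (1 : Matrix (Fin n) (Fin n) ℝ)).det := by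
    rw [← Matrix.det_mul, h2]
  have h4 : (t • (1 : Matrix (Fin n) (Fin n) ℝ) - Lm * Lp)
      = -(Lm * Lp - t • (1 : Matrix (Fin n) (Fin n) ℝ)) := (neg_sub _ _).symm
  have h5 : (t • (1 : Matrix (Fin n) (Fin n) ℝ) - Lm * Lp).det
      = (-1:ℝ)^n * (Lm.det * (St Lp Lm t).det) := by
    rw [h4, Matrix.det_neg, h3]
    simp
  have hpow : ((-1:ℝ)^n) * ((-1:ℝ)^n) = 1 := by
    rw [← mul_pow]
    norm_num
  unfold Pp
  rw [Polynomial.eval_mul, Polynomial.eval_C, hchar, h5]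
  field_simp
  ring_nf
  rw [pow_mul, show ((-1:ℝ)^n)^2 = ((-1:ℝ)^n) * ((-1:ℝ)^n) from sq _, hpow]
  ring

lemma hPne (hLminv : IsUnit Lm.det) : Pp Lp Lm ≠ 0 := by
  have hdetLm : Lm.det ≠ 0 := by
    intro h0
    rw [h0] at hLminv
    exact (not_isUnit_zero hLminv)
  apply mul_ne_zero
  · rw [Ne, Polynomial.C_eq_zero]
    intro h0
    have h1 : ((-1:ℝ)^n) ≠ 0 := by
      apply pow_ne_zero
      norm_num
    have h2 : (Lm.det)⁻¹ ≠ 0 := inv_ne_zero hdetLm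
    exact (mul_ne_zero h2 h1) h0
  · exact (Matrix.charpoly_monic _).ne_zero

lemma hProots (hLminv : IsUnit Lm.det) : (Pp Lp Lm).roots = (Lm * Lp).charpoly.roots := by
  have hdetLm : Lm.det ≠ 0 := by
    intro h0
    rw [h0] at hLminv
    exact (not_isUnit_zero hLminv)
  unfold Pp
  apply Polynomial.roots_C_mul
  apply mul_ne_zero (inv_ne_zero hdetLm)
  apply pow_ne_zero
  norm_num

noncomputable def zetaF (hLp : Lp.IsHermitian) (hLm : Lm.IsHermitian) (t : ℝ) : ℕ :=
  zeroCountR (St Lp Lm t) (hSt Lp Lm hLp hLm t)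

lemma hnearL (hLp : Lp.IsHermitian) (hLm : Lm.IsHermitian) (t₀ : ℝ) :
    ∃ δ : ℝ, 0 < δ ∧ ∀ t : ℝ, |t - t₀| < δ → (St Lp Lm t).det ≠ 0 →
      nuF Lp Lm hLp hLm t₀ ≤ nuF Lp Lm hLp hLm t ∧
      nuF Lp Lm hLp hLm t ≤ nuF Lp Lm hLp hLm t₀ + zetaF Lp Lm hLp hLm t₀ := by
  obtain ⟨δ, hδ, hn⟩ := near_line (St Lp Lm t₀) (-Lm⁻¹) (hSt Lp Lm hLp hLm t₀)
  refine ⟨δ, hδ, fun t ht hdet => ?_⟩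
  have heq := hline Lp Lm t t₀
  have hs' : (St Lp Lm t₀ + (t - t₀) • (-Lm⁻¹)).IsHermitian := heq ▸ hSt Lp Lm hLp hLm t
  have hdet' : (St Lp Lm t₀ + (t - t₀) • (-Lm⁻¹)).det ≠ 0 := by rw [← heq]; exact hdet
  obtain ⟨h1, h2⟩ := hn (t - t₀) ht hs' hdet'
  have he : negCountR _ hs' = nuF Lp Lm hLp hLm t := negCount_congr heq.symm hs' _
  constructor
  · exact he ▸ h1
  · exact he ▸ h2

lemma hmultL (hLp : Lp.IsHermitian) (hLm : Lm.IsHermitian) (hLminv : IsUnit Lm.det) (t₀ : ℝ) :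
    zetaF Lp Lm hLp hLm t₀ ≤ (Pp Lp Lm).roots.count t₀ := by
  classical
  rw [Polynomial.count_roots]
  rw [Polynomial.le_rootMultiplicity_iff (hPne Lp Lm hLminv)]
  apply det_poly_dvd (St Lp Lm t₀) (-Lm⁻¹) (hSt Lp Lm hLp hLm t₀) t₀
  intro t
  rw [hPeval Lp Lm hLminv t, hline Lp Lm t t₀]

lemma hconstL (hLp : Lp.IsHermitian) (hLm : Lm.IsHermitian) (hLminv : IsUnit Lm.det)
    (a b : ℝ) (hab : a ≤ b)
    (hroot : ∀ t : ℝ, a ≤ t → t ≤ b → (Pp Lp Lm).eval t ≠ 0) :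
    nuF Lp Lm hLp hLm a = nuF Lp Lm hLp hLm b := by
  have hpc : PreconnectedSpace (Set.Icc a b) := Subtype.preconnectedSpace isPreconnected_Icc
  set f : Set.Icc a b → ℕ := fun x => nuF Lp Lm hLp hLm x with hf
  have hlc : IsLocallyConstant f := by
    rw [IsLocallyConstant.iff_eventually_eq]
    intro x
    obtain ⟨δ, hδ, hn⟩ := hnearL Lp Lm hLp hLm (x : ℝ)
    have hz : zetaF Lp Lm hLp hLm (x:ℝ) = 0 := by
      apply zeroCount_eq_zero_of_det
      rw [← hPeval Lp Lm hLminv]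
      exact hroot x x.2.1 x.2.2
    have hev : ∀ᶠ z in nhds (x:ℝ), |z - (x:ℝ)| < δ := by
      have hball : Metric.ball (x:ℝ) δ ∈ nhds (x:ℝ) := Metric.ball_mem_nhds _ hδ
      filter_upwards [hball] with z hz2
      simpa [Real.dist_eq] using hz2
    have hev2 := (continuous_subtype_val.tendsto x).eventually hev
    filter_upwards [hev2] with y hy
    have hdet : (St Lp Lm (y:ℝ)).det ≠ 0 := by
      rw [← hPeval Lp Lm hLminv]
      exact hroot y y.2.1 y.2.2
    obtain ⟨h1, h2⟩ := hn (y:ℝ) hy hdet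
    have : nuF Lp Lm hLp hLm (y:ℝ) = nuF Lp Lm hLp hLm (x:ℝ) := by omega
    exact this
  exact hlc.apply_eq_of_preconnectedSpace ⟨a, le_refl a, hab⟩ ⟨b, hab, le_refl b⟩

lemma htravL (hLp : Lp.IsHermitian) (hLm : Lm.IsHermitian) (hLminv : IsUnit Lm.det) :
    ∀ (k : ℕ) (a b : ℝ), a < b → (Pp Lp Lm).eval a ≠ 0 → (Pp Lp Lm).eval b ≠ 0 →
    ((Pp Lp Lm).roots.filter (fun t => a < t ∧ t < b)).card = k →
    ((nuF Lp Lm hLp hLm b : ℤ) - (nuF Lp Lm hLp hLm a : ℤ)).natAbs ≤ k := by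
  classical
  intro k
  induction k using Nat.strong_induction_on with
  | _ k IH =>
  intro a b hab ha hb hcard
  by_cases h0 : ((Pp Lp Lm).roots.filter (fun t => a < t ∧ t < b)) = 0
  · have hc : nuF Lp Lm hLp hLm a = nuF Lp Lm hLp hLm b := by
      apply hconstL Lp Lm hLp hLm hLminv a b (le_of_lt hab)
      intro t h1 h2 heval
      rcases eq_or_lt_of_le h1 with rfl | h1'
      · exact ha heval
      rcases eq_or_lt_of_le h2 with rfl | h2'
      · exact hb heval
      have htroot : t ∈ (Pp Lp Lm).roots :=
        Polynomial.mem_roots'.2 ⟨hPne Lp Lm hLminv, heval⟩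
      have hmem : t ∈ ((Pp Lp Lm).roots.filter (fun t => a < t ∧ t < b)) :=
        Multiset.mem_filter.2 ⟨htroot, h1', h2'⟩
      rw [h0] at hmem
      simp at hmem
    rw [hc]
    simp
  · obtain ⟨t₀, ht₀⟩ := Multiset.exists_mem_of_ne_zero h0
    rw [Multiset.mem_filter] at ht₀
    obtain ⟨ht₀root, ht₀a, ht₀b⟩ := ht₀
    have hm1 : 1 ≤ (Pp Lp Lm).roots.count t₀ := Multiset.one_le_count_iff_mem.2 ht₀root
    set m := (Pp Lp Lm).roots.count t₀ with hm
    obtain ⟨δ, hδ, hn⟩ := hnearL Lp Lm hLp hLm t₀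
    set δ' := min δ (min (t₀ - a) (b - t₀)) with hδ'
    have hδ'0 : 0 < δ' := lt_min hδ (lt_min (by linarith) (by linarith))
    have hδ'1 : δ' ≤ δ := min_le_left _ _
    have hδ'2 : δ' ≤ t₀ - a := le_trans (min_le_right _ _) (min_le_left _ _)
    have hδ'3 : δ' ≤ b - t₀ := le_trans (min_le_right _ _) (min_le_right _ _)
    obtain ⟨a', ha'mem, ha'not⟩ := (Set.Ioo_infinite
      (by linarith : t₀ - δ' < t₀)).exists_notMem_finset (Pp Lp Lm).roots.toFinset
    obtain ⟨b', hb'mem, hb'not⟩ := (Set.Ioo_infinite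
      (by linarith : t₀ < t₀ + δ')).exists_notMem_finset (Pp Lp Lm).roots.toFinset
    obtain ⟨ha'1, ha'2⟩ := ha'mem
    obtain ⟨hb'1, hb'2⟩ := hb'mem
    have ha' : (Pp Lp Lm).eval a' ≠ 0 := fun h =>
      ha'not (Multiset.mem_toFinset.2 (Polynomial.mem_roots'.2 ⟨hPne Lp Lm hLminv, h⟩))
    have hb' : (Pp Lp Lm).eval b' ≠ 0 := fun h =>
      hb'not (Multiset.mem_toFinset.2 (Polynomial.mem_roots'.2 ⟨hPne Lp Lm hLminv, h⟩))
    have haa' : a < a' := by linarith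
    have hbb' : b' < b := by linarith
    have hdeta' : (St Lp Lm a').det ≠ 0 := by rw [← hPeval Lp Lm hLminv]; exact ha'
    have hdetb' : (St Lp Lm b').det ≠ 0 := by rw [← hPeval Lp Lm hLminv]; exact hb'
    obtain ⟨hna1, hna2⟩ := hn a' (by rw [abs_sub_lt_iff]; constructor <;> linarith) hdeta'
    obtain ⟨hnb1, hnb2⟩ := hn b' (by rw [abs_sub_lt_iff]; constructor <;> linarith) hdetb'
    have hzm : zetaF Lp Lm hLp hLm t₀ ≤ m := hmultL Lp Lm hLp hLm hLminv t₀
    set k₁ := ((Pp Lp Lm).roots.filter (fun t => a < t ∧ t < a')).card with hk₁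
    set k₂ := ((Pp Lp Lm).roots.filter (fun t => b' < t ∧ t < b)).card with hk₂
    have hsplit : k₁ + m + k₂ ≤ k := by
      have h3 := filter_three ((Pp Lp Lm).roots)
        (fun t => a < t ∧ t < a') (fun t => t = t₀) (fun t => b' < t ∧ t < b)
        (fun t => a < t ∧ t < b)
        (fun x hx => ⟨hx.1, by linarith [hx.2]⟩)
        (fun x hx => by subst hx; exact ⟨ht₀a, ht₀b⟩)
        (fun x hx => ⟨by linarith [hx.1], hx.2⟩)
        (fun x hx => by obtain ⟨⟨_, h1⟩, h2⟩ := hx; subst h2; linarith)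
        (fun x hx => by obtain ⟨⟨_, h1⟩, ⟨h2, _⟩⟩ := hx; linarith)
        (fun x hx => by obtain ⟨h1, ⟨h2, _⟩⟩ := hx; subst h1; linarith)
      rw [card_filter_eq] at h3
      omega
    have hk₁k : k₁ < k := by omega
    have hk₂k : k₂ < k := by omega
    have IH1 := IH k₁ hk₁k a a' haa' ha ha' rfl
    have IH2 := IH k₂ hk₂k b' b hbb' hb' hb rfl
    omega

lemma endpointL (hLp : Lp.IsHermitian) (hLm : Lm.IsHermitian)
    (hLpinv : IsUnit Lp.det) (hLminv : IsUnit Lm.det) :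
    ∃ T : ℝ, 0 < T ∧ (Pp Lp Lm).eval (-T) ≠ 0 ∧
      (∀ r ∈ (Pp Lp Lm).roots, -T < r) ∧
      nuF Lp Lm hLp hLm (-T) = negCountR Lm hLm := by
  classical
  have hdetLm : Lm.det ≠ 0 := hLminv.ne_zero
  have hLmi : (Lm⁻¹).IsHermitian := hLm.inv
  obtain ⟨δL, hδL, hpertL⟩ := pert Lm⁻¹ Lp hLmi
  obtain ⟨lb, hlb⟩ := (((Pp Lp Lm).roots.toFinset : Finset ℝ) : Set ℝ).toFinite.bddBelow
  set T := max (2/δL) (|lb| + 1) with hT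
  have hT1 : 0 < T := lt_of_lt_of_le (by positivity) (le_max_right _ _)
  have hTub : |lb| + 1 ≤ T := le_max_right _ _
  have hTroots : ∀ r ∈ (Pp Lp Lm).roots, -T < r := by
    intro r hr
    have h1 : lb ≤ r := hlb (by simpa using Multiset.mem_toFinset.2 hr)
    have h2 : -|lb| ≤ lb := neg_abs_le lb
    linarith
  have hTne : (Pp Lp Lm).eval (-T) ≠ 0 := by
    intro h0
    have : (-T) ∈ (Pp Lp Lm).roots := Polynomial.mem_roots'.2 ⟨hPne Lp Lm hLminv, h0⟩
    exact absurd (hTroots _ this) (lt_irrefl _)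
  have hTinvpos : 0 < T⁻¹ := by positivity
  have hTinvlt : T⁻¹ < δL := by
    have h2d : (0:ℝ) < 2/δL := by positivity
    have hT2 : 2/δL ≤ T := le_max_left _ _
    have h3 : T⁻¹ ≤ (2/δL)⁻¹ := by
      apply inv_anti₀ h2d hT2
    rw [inv_div] at h3
    linarith
  set M1 := Lm⁻¹ + T⁻¹ • Lp with hM1
  have hsc : T⁻¹ • St Lp Lm (-T) = M1 := by
    unfold St
    rw [smul_sub, smul_smul]
    have : T⁻¹ * (-T) = -1 := by field_simp
    rw [this, neg_one_smul, sub_neg_eq_add, hM1, add_comm]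
  have hM1h : M1.IsHermitian := Matrix.IsHermitian.add hLmi (hermitian_smul_real hLp T⁻¹)
  have hsch : (T⁻¹ • St Lp Lm (-T)).IsHermitian := by rw [hsc]; exact hM1h
  have hsmul := negCount_smul (St Lp Lm (-T)) (hSt Lp Lm hLp hLm (-T)) T⁻¹ hTinvpos hsch
  have hcongr1 : negCountR _ hsch = negCountR M1 hM1h := negCount_congr hsc hsch hM1h
  have hdetST : (St Lp Lm (-T)).det ≠ 0 := by
    rw [← hPeval Lp Lm hLminv]; exact hTne
  have hdetM1 : M1.det ≠ 0 := by
    rw [← hsc, Matrix.det_smul]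
    simp only [Fintype.card_fin]
    exact mul_ne_zero (pow_ne_zero _ (ne_of_gt hTinvpos)) hdetST
  have habs : |T⁻¹| < δL := by rwa [abs_of_pos hTinvpos]
  obtain ⟨hp1, hp2⟩ := hpertL T⁻¹ habs hM1h
  have hdetLmi : (Lm⁻¹).det ≠ 0 := by
    rw [Matrix.det_nonsing_inv, Ring.inverse_eq_inv]
    exact inv_ne_zero hdetLm
  have hz1 : zeroCountR _ hM1h = 0 := zeroCount_eq_zero_of_det _ hM1h hdetM1
  have hz2 : zeroCountR _ hLmi = 0 := zeroCount_eq_zero_of_det _ hLmi hdetLmi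
  have hpart1 := count_partition _ hM1h
  have hpart2 := count_partition _ hLmi
  have hp1' : negCountR Lm⁻¹ hLmi ≤ negCountR M1 hM1h := hp1
  have hp2' : posCountR Lm⁻¹ hLmi ≤ posCountR M1 hM1h := hp2
  have hM1eq : negCountR M1 hM1h = negCountR _ hLmi := by omega
  have hinv : negCountR _ hLmi = negCountR Lm hLm := negCount_inv Lm hLm hdetLm hLmi
  refine ⟨T, hT1, hTne, hTroots, ?_⟩
  calc nuF Lp Lm hLp hLm (-T) = negCountR _ hsch := hsmul.symm
    _ = negCountR M1 hM1h := hcongr1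
    _ = negCountR _ hLmi := hM1eq
    _ = negCountR Lm hLm := hinv

end Main

end InstAux


open InstAux in
/-- for `L₊, L₋` real symmetric invertible, the number of real positive
eigenvalues `λ` of the canonical problem `L₊ u = -λ v`, `L₋ v = λ u` (equivalently the
number, with multiplicity, of negative real eigenvalues of `L₋ L₊`, since `λ² ` is a
negative eigenvalue of `-L₋L₊`) is at least `|n(L₊) - n(L₋)|`. -/
theorem canonical_instability_count (n : ℕ) (Lp Lm : Matrix (Fin n) (Fin n) ℝ)
    (hLp : Lp.IsHermitian) (hLm : Lm.IsHermitian)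
    (hLpinv : IsUnit Lp.det) (hLminv : IsUnit Lm.det) :
    ((negCountR Lp hLp : ℤ) - (negCountR Lm hLm : ℤ)).natAbs ≤
      Multiset.card ((Lm * Lp).charpoly.roots.filter (fun t => t < 0)) := by
  classical
  have hdetLp : Lp.det ≠ 0 := hLpinv.ne_zero
  obtain ⟨T, hT, hTne, hTroots, hTnu⟩ := endpointL Lp Lm hLp hLm hLpinv hLminv
  have hSt0 : St Lp Lm 0 = Lp := by unfold St; simp
  have h0ne : (Pp Lp Lm).eval 0 ≠ 0 := by
    rw [hPeval Lp Lm hLminv 0, hSt0]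
    exact hdetLp
  have hnu0 : nuF Lp Lm hLp hLm 0 = negCountR Lp hLp :=
    negCount_congr hSt0 (hSt Lp Lm hLp hLm 0) hLp
  have hTneg : -T < 0 := by linarith
  have htrav := htravL Lp Lm hLp hLm hLminv
    (((Pp Lp Lm).roots.filter (fun t => -T < t ∧ t < 0)).card) (-T) 0 hTneg hTne h0ne rfl
  have hmono : (((Pp Lp Lm).roots.filter (fun t => -T < t ∧ t < 0))).card
      ≤ Multiset.card ((Lm * Lp).charpoly.roots.filter (fun t => t < 0)) := by
    rw [← hProots Lp Lm hLminv]
    apply Multiset.card_le_card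
    apply Multiset.monotone_filter_right
    intro t ht
    exact ht.2
  rw [← hnu0, ← hTnu]
  exact le_trans htrav hmono
end
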